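/- arXiv:2412.16801 — 2 statements merged into one kernel-verified Lean document; each statement's English description precedes it below -/
import Mathlib

section
/- Variational derivative of the NLS Hamiltonian with respect to u₂ (key computation in Theorem 1): let u₁, u₂, h : ℝ² → ℂ be smooth and compactly supported and r, s : ℝ → ℝ be continuous. Then the function ε ↦ H(u₁, u₂ + εh) of the real variable ε is differentiable at ε = 0 with derivative ∬_{ℝ²} [−Δu₁ − (r(y)+s(x))u₁ − 2u₁·(T(u₁u₂))]·h dx dy, where Δu₁ = ∂²u₁/∂x² + ∂²u₁/∂y². -/
open MeasureTheory

/-- The antiderivative operator `(∂⁻¹f)(x) = (1/2)[∫_{-∞}^x f − ∫_x^{+∞} f]`. -/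
noncomputable def pinv (f : ℝ → ℂ) (x : ℝ) : ℂ :=
  (1 / 2) * ((∫ s in Set.Iio x, f s) - ∫ s in Set.Ioi x, f s)

/-- `∂_x^{-1}` : the antiderivative operator in the first variable. -/
noncomputable def pinvX (g : ℝ × ℝ → ℂ) : ℝ × ℝ → ℂ :=
  fun p => pinv (fun s => g (s, p.2)) p.1

/-- `∂_y^{-1}` : the antiderivative operator in the second variable. -/
noncomputable def pinvY (g : ℝ × ℝ → ℂ) : ℝ × ℝ → ℂ :=
  fun p => pinv (fun s => g (p.1, s)) p.2

/-- `∂_x` : partial derivative in the first variable. -/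
noncomputable def dX (g : ℝ × ℝ → ℂ) : ℝ × ℝ → ℂ :=
  fun p => deriv (fun x => g (x, p.2)) p.1

/-- `∂_y` : partial derivative in the second variable. -/
noncomputable def dY (g : ℝ × ℝ → ℂ) : ℝ × ℝ → ℂ :=
  fun p => deriv (fun y => g (p.1, y)) p.2

/-- `T = ∂_x ∂_y^{-1} + ∂_y ∂_x^{-1}`. -/
noncomputable def T (g : ℝ × ℝ → ℂ) : ℝ × ℝ → ℂ :=
  fun p => dX (pinvY g) p + dY (pinvX g) p

/-- The NLS Hamiltonian (1.11). -/
noncomputable def Ham (r s : ℝ → ℝ) (u₁ u₂ : ℝ × ℝ → ℂ) : ℂ :=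
  ∫ p : ℝ × ℝ,
    (dX u₁ p * dX u₂ p + dY u₁ p * dY u₂ p
      - u₁ p * ((r p.2 : ℂ) + (s p.1 : ℂ)) * u₂ p
      - u₁ p * u₂ p * T (fun q => u₁ q * u₂ q) p)

namespace NLSaux
open Set Filter Topology


lemma pinv_eq {f : ℝ → ℂ} (hfi : Integrable f) (x : ℝ) :
    pinv f x = (∫ s in Iic x, f s) - (1 / 2) * ∫ s, f s := by
  have h1 : (∫ s in Iio x, f s) = ∫ s in Iic x, f s :=
    setIntegral_congr_set Iio_ae_eq_Iic
  have h2 : (∫ s in Iic x, f s) + ∫ s in Ioi x, f s = ∫ s, f s :=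
    intervalIntegral.integral_Iic_add_Ioi hfi.integrableOn hfi.integrableOn
  have h3 : (∫ s in Ioi x, f s) = (∫ s, f s) - ∫ s in Iic x, f s := by
    linear_combination h2
  rw [pinv, h1, h3]; ring

lemma pinv_rep {f : ℝ → ℂ} (hfi : Integrable f) (x : ℝ) :
    pinv f x = pinv f 0 + ∫ t in (0:ℝ)..x, f t := by
  rw [pinv_eq hfi, pinv_eq hfi,
    ← intervalIntegral.integral_Iic_sub_Iic hfi.integrableOn hfi.integrableOn]
  ring

lemma hasDerivAt_pinv {f : ℝ → ℂ} (hf : Continuous f) (hfi : Integrable f) (x : ℝ) :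
    HasDerivAt (pinv f) (f x) x := by
  have h : HasDerivAt (fun u => ∫ t in (0:ℝ)..u, f t) (f x) x :=
    intervalIntegral.integral_hasDerivAt_right hfi.intervalIntegrable
      (hf.stronglyMeasurable.stronglyMeasurableAtFilter)
      hf.continuousAt
  exact (h.const_add (pinv f 0)).congr_of_eventuallyEq
    (Eventually.of_forall fun u => pinv_rep hfi u)

lemma continuous_pinv {f : ℝ → ℂ} (hf : Continuous f) (hfi : Integrable f) :
    Continuous (pinv f) :=
  by
  have hd : Differentiable ℝ (pinv f) := fun x => (hasDerivAt_pinv hf hfi x).differentiableAt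
  exact hd.continuous

lemma tendsto_pinv_atTop {f : ℝ → ℂ} (hfi : Integrable f) :
    Tendsto (pinv f) atTop (𝓝 ((1 / 2) * ∫ s, f s)) := by
  have h : Tendsto (fun x => ∫ t in (0:ℝ)..x, f t) atTop (𝓝 (∫ t in Ioi (0:ℝ), f t)) :=
    intervalIntegral_tendsto_integral_Ioi 0 hfi.integrableOn tendsto_id
  have h2 := h.const_add (pinv f 0)
  have hval : pinv f 0 + ∫ t in Ioi (0:ℝ), f t = (1 / 2) * ∫ s, f s := by
    have h3 : (∫ s in Iic (0:ℝ), f s) + ∫ s in Ioi (0:ℝ), f s = ∫ s, f s :=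
      intervalIntegral.integral_Iic_add_Ioi hfi.integrableOn hfi.integrableOn
    rw [pinv_eq hfi, ← h3]; ring
  rw [← hval]
  exact h2.congr' (Eventually.of_forall fun x => (pinv_rep hfi x).symm)

lemma tendsto_pinv_atBot {f : ℝ → ℂ} (hfi : Integrable f) :
    Tendsto (pinv f) atBot (𝓝 (-((1 / 2) * ∫ s, f s))) := by
  have h : Tendsto (fun x => ∫ t in x..(0:ℝ), f t) atBot (𝓝 (∫ t in Iic (0:ℝ), f t)) :=
    intervalIntegral_tendsto_integral_Iic 0 hfi.integrableOn tendsto_id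
  have h2 := (h.neg).const_add (pinv f 0)
  have hval : pinv f 0 + -∫ t in Iic (0:ℝ), f t = -((1 / 2) * ∫ s, f s) := by
    have h3 : (∫ s in Iic (0:ℝ), f s) + ∫ s in Ioi (0:ℝ), f s = ∫ s, f s :=
      intervalIntegral.integral_Iic_add_Ioi hfi.integrableOn hfi.integrableOn
    rw [pinv_eq hfi, ← h3]; ring
  rw [← hval]
  refine h2.congr' (Eventually.of_forall fun x => ?_)
  rw [pinv_rep hfi x, intervalIntegral.integral_symm x 0]

/-- 1D anti-self-adjointness of `pinv`. -/
lemma pinv_adjoint {f g : ℝ → ℂ} (hf : Continuous f) (hfc : HasCompactSupport f)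
    (hg : Continuous g) (hgc : HasCompactSupport g) :
    ∫ x, pinv f x * g x = -∫ x, f x * pinv g x := by
  have hfi : Integrable f := hf.integrable_of_hasCompactSupport hfc
  have hgi : Integrable g := hg.integrable_of_hasCompactSupport hgc
  have hu : ∀ x, HasDerivAt (pinv f) (f x) x := hasDerivAt_pinv hf hfi
  have hv : ∀ x, HasDerivAt (pinv g) (g x) x := hasDerivAt_pinv hg hgi
  have huv' : Integrable (pinv f * g) :=
    ((continuous_pinv hf hfi).mul hg).integrable_of_hasCompactSupport hgc.mul_left
  have hu'v : Integrable (f * pinv g) :=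
    (hf.mul (continuous_pinv hg hgi)).integrable_of_hasCompactSupport hfc.mul_right
  have htop : Tendsto (pinv f * pinv g) atTop
      (𝓝 (((1/2) * ∫ s, f s) * ((1/2) * ∫ s, g s))) :=
    (tendsto_pinv_atTop hfi).mul (tendsto_pinv_atTop hgi)
  have hbot : Tendsto (pinv f * pinv g) atBot
      (𝓝 (((1/2) * ∫ s, f s) * ((1/2) * ∫ s, g s))) := by
    have := (tendsto_pinv_atBot hfi).mul (tendsto_pinv_atBot hgi)
    simp only [neg_mul_neg] at this; exact this
  have key := integral_mul_deriv_eq_deriv_mul (fun x _ => hu x) (fun x _ => hv x) huv' hu'v hbot htop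
  rw [key]; ring



lemma exists_R {g : ℝ × ℝ → ℂ} (hgc : HasCompactSupport g) :
    ∃ R : ℝ, 0 < R ∧ ∀ p : ℝ × ℝ, R < |p.1| ∨ R < |p.2| → g p = 0 := by
  obtain ⟨R, hR⟩ := hgc.isBounded.subset_closedBall 0
  refine ⟨max R 1, lt_of_lt_of_le one_pos (le_max_right _ _), fun p hp => ?_⟩
  apply image_eq_zero_of_notMem_tsupport
  intro hmem
  have hb := hR hmem
  rw [Metric.mem_closedBall, dist_zero_right, Prod.norm_def] at hb
  have h1 : ‖p.1‖ ≤ R := le_trans (le_max_left _ _) hb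
  have h2 : ‖p.2‖ ≤ R := le_trans (le_max_right _ _) hb
  rw [Real.norm_eq_abs] at h1 h2
  have hRm : R ≤ max R 1 := le_max_left _ _
  rcases hp with hp | hp <;> linarith

lemma sliceY_compactSupport {g : ℝ × ℝ → ℂ} (hgc : HasCompactSupport g) (x : ℝ) :
    HasCompactSupport (fun s => g (x, s)) := by
  obtain ⟨R, hR0, hR⟩ := exists_R hgc
  refine HasCompactSupport.intro (isCompact_Icc (a := -R) (b := R)) (fun s hs => ?_)
  rw [mem_Icc, not_and_or, not_le, not_le] at hs
  refine hR (x, s) (Or.inr ?_)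
  rcases hs with hs | hs
  · exact lt_abs.mpr (Or.inr (by linarith))
  · exact lt_abs.mpr (Or.inl hs)

lemma sliceX_compactSupport {g : ℝ × ℝ → ℂ} (hgc : HasCompactSupport g) (y : ℝ) :
    HasCompactSupport (fun t => g (t, y)) := by
  obtain ⟨R, hR0, hR⟩ := exists_R hgc
  refine HasCompactSupport.intro (isCompact_Icc (a := -R) (b := R)) (fun t ht => ?_)
  rw [mem_Icc, not_and_or, not_le, not_le] at ht
  refine hR (t, y) (Or.inl ?_)
  rcases ht with ht | ht
  · exact lt_abs.mpr (Or.inr (by linarith))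
  · exact lt_abs.mpr (Or.inl ht)

lemma sliceY_integrable {g : ℝ × ℝ → ℂ} (hg : Continuous g) (hgc : HasCompactSupport g)
    (x : ℝ) : Integrable (fun s => g (x, s)) :=
  (hg.comp (continuous_const.prodMk continuous_id)).integrable_of_hasCompactSupport
    (sliceY_compactSupport hgc x)

lemma sliceX_integrable {g : ℝ × ℝ → ℂ} (hg : Continuous g) (hgc : HasCompactSupport g)
    (y : ℝ) : Integrable (fun t => g (t, y)) :=
  (hg.comp (continuous_id.prodMk continuous_const)).integrable_of_hasCompactSupport
    (sliceX_compactSupport hgc y)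

/-- Differentiation under the integral sign for set integrals of compactly supported
functions. -/
lemma hasDerivAt_integral_slice {g g' : ℝ × ℝ → ℂ} (hg : Continuous g)
    (hgc : HasCompactSupport g) (hg' : Continuous g') (hg'c : HasCompactSupport g')
    (hd : ∀ x y, HasDerivAt (fun t => g (t, y)) (g' (x, y)) x)
    (S : Set ℝ) (x₀ : ℝ) :
    HasDerivAt (fun x => ∫ s in S, g (x, s)) (∫ s in S, g' (x₀, s)) x₀ := by
  obtain ⟨C, hC⟩ := hg'c.exists_bound_of_continuous hg'
  obtain ⟨R, hR0, hR⟩ := exists_R hg'c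
  have key := hasDerivAt_integral_of_dominated_loc_of_deriv_le
    (μ := volume.restrict S) (F := fun x s => g (x, s)) (F' := fun x s => g' (x, s))
    (x₀ := x₀) (bound := (Icc (-R) R).indicator fun _ => C) Filter.univ_mem
    (Eventually.of_forall fun x =>
      ((hg.comp (continuous_const.prodMk continuous_id)).aestronglyMeasurable))
    ((sliceY_integrable hg hgc x₀).restrict)
    ((hg'.comp (continuous_const.prodMk continuous_id)).aestronglyMeasurable)
    (ae_of_all _ fun s x _ => ?_)
    (((integrable_indicator_iff measurableSet_Icc).2
      (integrableOn_const measure_Icc_lt_top.ne)).restrict)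
    (ae_of_all _ fun s x _ => hd x s)
  · exact key.2
  · by_cases hs : s ∈ Icc (-R) R
    · rw [indicator_of_mem hs]; exact hC _
    · rw [indicator_of_notMem hs]
      rw [mem_Icc, not_and_or, not_le, not_le] at hs
      have : g' (x, s) = 0 := by
        refine hR (x, s) (Or.inr ?_)
        rcases hs with hs | hs
        · exact lt_abs.mpr (Or.inr (by linarith))
        · exact lt_abs.mpr (Or.inl hs)
      simp [this]

/-- Differentiation of `pinvY` in the first variable. -/
lemma hasDerivAt_pinvY_fst {g g' : ℝ × ℝ → ℂ} (hg : Continuous g)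
    (hgc : HasCompactSupport g) (hg' : Continuous g') (hg'c : HasCompactSupport g')
    (hd : ∀ x y, HasDerivAt (fun t => g (t, y)) (g' (x, y)) x)
    (x y : ℝ) :
    HasDerivAt (fun t => pinvY g (t, y)) (pinvY g' (x, y)) x := by
  have h1 := hasDerivAt_integral_slice hg hgc hg' hg'c hd (Iio y) x
  have h2 := hasDerivAt_integral_slice hg hgc hg' hg'c hd (Ioi y) x
  simpa [pinvY, pinv] using ((h1.sub h2).const_mul ((1 : ℂ) / 2))



/-- partial derivative in the first coordinate, via `fderiv`. -/
noncomputable def pX (g : ℝ × ℝ → ℂ) : ℝ × ℝ → ℂ := fun p => fderiv ℝ g p (1, 0)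

lemma hasDerivAt_pX {g : ℝ × ℝ → ℂ} (hg : ContDiff ℝ (⊤ : ℕ∞) g) (x y : ℝ) :
    HasDerivAt (fun t => g (t, y)) (pX g (x, y)) x := by
  have hι : HasDerivAt (fun t : ℝ => (t, y)) ((1 : ℝ), (0 : ℝ)) x :=
    (hasDerivAt_id x).prodMk (hasDerivAt_const x y)
  exact ((hg.differentiable (by simp) (x, y)).hasFDerivAt).comp_hasDerivAt x hι

lemma dX_eq_pX {g : ℝ × ℝ → ℂ} (hg : ContDiff ℝ (⊤ : ℕ∞) g) : dX g = pX g :=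
  funext fun p => (hasDerivAt_pX hg p.1 p.2).deriv

lemma contDiff_pX {g : ℝ × ℝ → ℂ} (hg : ContDiff ℝ (⊤ : ℕ∞) g) : ContDiff ℝ (⊤ : ℕ∞) (pX g) :=
  (hg.fderiv_right (by simp)).clm_apply contDiff_const

lemma compactSupport_pX {g : ℝ × ℝ → ℂ} (hgc : HasCompactSupport g) :
    HasCompactSupport (pX g) :=
  hgc.fderiv_apply ℝ (1, 0)

lemma continuous_pX {g : ℝ × ℝ → ℂ} (hg : ContDiff ℝ (⊤ : ℕ∞) g) : Continuous (pX g) :=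
  (contDiff_pX hg).continuous

/-- Joint continuity of `pinvY g`. -/
lemma continuous_pinvY {F : ℝ × ℝ → ℂ} (hF : Continuous F) (hFc : HasCompactSupport F) :
    Continuous (pinvY F) := by
  obtain ⟨R, hR0, hR⟩ := exists_R hFc
  have hzl : ∀ x s : ℝ, s ≤ -R-1 → F (x, s) = 0 := fun x s hs =>
    hR (x, s) (Or.inr (lt_abs.mpr (Or.inr (by linarith))))
  have hzr : ∀ x s : ℝ, R+1 ≤ s → F (x, s) = 0 := fun x s hs =>
    hR (x, s) (Or.inr (lt_abs.mpr (Or.inl (by linarith))))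
  have e1 : ∀ x y, (∫ s in Iic y, F (x, s)) = ∫ t in (-R-1)..y, F (x, t) := by
    intro x y
    have hint := sliceY_integrable hF hFc x
    have h0 : (∫ s in Iic (-R-1), F (x, s)) = 0 := by
      rw [setIntegral_congr_fun measurableSet_Iic
        (g := fun _ => (0:ℂ)) (fun s hs => hzl x s hs)]
      simp
    rw [← intervalIntegral.integral_Iic_sub_Iic hint.integrableOn hint.integrableOn, h0,
      sub_zero]
  have e2 : ∀ x, (∫ s, F (x, s)) = ∫ t in (-R-1)..(R+1), F (x, t) := by
    intro x
    have hint := sliceY_integrable hF hFc x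
    have h0 : (∫ s in Ioi (R+1), F (x, s)) = 0 := by
      rw [setIntegral_congr_fun measurableSet_Ioi
        (g := fun _ => (0:ℂ)) (fun s hs => hzr x s (le_of_lt hs))]
      simp
    rw [← intervalIntegral.integral_Iic_add_Ioi hint.integrableOn hint.integrableOn, h0,
      add_zero, e1]
  have heq : pinvY F = fun p : ℝ × ℝ =>
      (∫ t in (-R-1)..p.2, F (p.1, t)) - (1/2 : ℂ) * ∫ t in (-R-1)..(R+1), F (p.1, t) := by
    funext p
    rw [pinvY, pinv_eq (sliceY_integrable hF hFc p.1), e1, e2]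
  rw [heq]
  have hc1 : Continuous fun p : ℝ × ℝ => ∫ t in (-R-1)..p.2, F (p.1, t) :=
    intervalIntegral.continuous_parametric_primitive_of_continuous
      (f := fun x t => F (x, t)) (by exact hF)
  have hc2 : Continuous fun p : ℝ × ℝ => ∫ t in (-R-1)..(R+1), F (p.1, t) :=
    (intervalIntegral.continuous_parametric_intervalIntegral_of_continuous'
      (f := fun x t => F (x, t)) (by exact hF) _ _).comp continuous_fst
  exact hc1.sub (continuous_const.mul hc2)

/-- swap lemmas -/
lemma pinvX_swap (g : ℝ × ℝ → ℂ) (p : ℝ × ℝ) :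
    pinvX g p = pinvY (g ∘ Prod.swap) p.swap := rfl

lemma dY_swap (g : ℝ × ℝ → ℂ) (p : ℝ × ℝ) :
    dY g p = dX (g ∘ Prod.swap) p.swap := rfl

lemma integral_swap_eq (G : ℝ × ℝ → ℂ) :
    ∫ p : ℝ × ℝ, G p.swap = ∫ p : ℝ × ℝ, G p := by
  simp only [Measure.volume_eq_prod]
  exact MeasureTheory.integral_prod_swap G


lemma contDiff_swap {g : ℝ × ℝ → ℂ} (hg : ContDiff ℝ (⊤ : ℕ∞) g) :
    ContDiff ℝ (⊤ : ℕ∞) (g ∘ Prod.swap) :=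
  hg.comp (contDiff_snd.prodMk contDiff_fst)

lemma compactSupport_swap {g : ℝ × ℝ → ℂ} (hgc : HasCompactSupport g) :
    HasCompactSupport (g ∘ Prod.swap) :=
  hgc.comp_homeomorph (Homeomorph.prodComm ℝ ℝ)

lemma hasDerivAt_pinvY' {g : ℝ × ℝ → ℂ} (hg : ContDiff ℝ (⊤ : ℕ∞) g)
    (hgc : HasCompactSupport g) (x y : ℝ) :
    HasDerivAt (fun t => pinvY g (t, y)) (pinvY (pX g) (x, y)) x :=
  hasDerivAt_pinvY_fst hg.continuous hgc (continuous_pX hg) (compactSupport_pX hgc)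
    (hasDerivAt_pX hg) x y

lemma dX_pinvY_eq {g : ℝ × ℝ → ℂ} (hg : ContDiff ℝ (⊤ : ℕ∞) g) (hgc : HasCompactSupport g) :
    dX (pinvY g) = pinvY (pX g) :=
  funext fun p => (hasDerivAt_pinvY' hg hgc p.1 p.2).deriv

lemma fubini1 (G : ℝ × ℝ → ℂ) (hG : Integrable G) :
    ∫ p : ℝ × ℝ, G p = ∫ x : ℝ, ∫ y : ℝ, G (x, y) := by
  rw [Measure.volume_eq_prod]
  exact MeasureTheory.integral_prod G (by rwa [← Measure.volume_eq_prod])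

lemma fubini2 (G : ℝ × ℝ → ℂ) (hG : Integrable G) :
    ∫ p : ℝ × ℝ, G p = ∫ y : ℝ, ∫ x : ℝ, G (x, y) := by
  rw [fubini1 G hG]
  exact MeasureTheory.integral_integral_swap (by rwa [← Measure.volume_eq_prod])

/-- Integration by parts in the first variable, for the `x`-derivative terms. -/
lemma partsX {f h : ℝ × ℝ → ℂ} (hf : ContDiff ℝ (⊤ : ℕ∞) f) (hfc : HasCompactSupport f)
    (hh : ContDiff ℝ (⊤ : ℕ∞) h) (hhc : HasCompactSupport h) :
    ∫ p : ℝ × ℝ, pX f p * pX h p = -∫ p : ℝ × ℝ, pX (pX f) p * h p := by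
  have hpf := contDiff_pX hf
  have hpfc := compactSupport_pX hfc
  have hppf := contDiff_pX hpf
  have hppfc := compactSupport_pX hpfc
  have hph := contDiff_pX hh
  have hphc := compactSupport_pX hhc
  have hint1 : Integrable (fun p : ℝ × ℝ => pX f p * pX h p) :=
    (hpf.continuous.mul hph.continuous).integrable_of_hasCompactSupport hpfc.mul_right
  have hint2 : Integrable (fun p : ℝ × ℝ => pX (pX f) p * h p) :=
    (hppf.continuous.mul hh.continuous).integrable_of_hasCompactSupport hppfc.mul_right
  rw [fubini2 _ hint1, fubini2 _ hint2, ← integral_neg]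
  refine integral_congr_ae (Filter.Eventually.of_forall fun y => ?_)
  show (∫ x : ℝ, pX f (x, y) * pX h (x, y)) = -∫ x : ℝ, pX (pX f) (x, y) * h (x, y)
  refine integral_mul_deriv_eq_deriv_mul_of_integrable
    (u := fun x => pX f (x, y)) (u' := fun x => pX (pX f) (x, y))
    (v := fun x => h (x, y)) (v' := fun x => pX h (x, y))
    (fun x _ => hasDerivAt_pX hpf x y) (fun x _ => hasDerivAt_pX hh x y)
    ?_ ?_ ?_
  · exact ((hpf.continuous.comp (continuous_id.prodMk continuous_const)).mul
      (hph.continuous.comp (continuous_id.prodMk continuous_const))).integrable_of_hasCompactSupport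
      (sliceX_compactSupport hpfc y).mul_right
  · exact ((hppf.continuous.comp (continuous_id.prodMk continuous_const)).mul
      (hh.continuous.comp (continuous_id.prodMk continuous_const))).integrable_of_hasCompactSupport
      (sliceX_compactSupport hppfc y).mul_right
  · exact ((hpf.continuous.comp (continuous_id.prodMk continuous_const)).mul
      (hh.continuous.comp (continuous_id.prodMk continuous_const))).integrable_of_hasCompactSupport
      (sliceX_compactSupport hpfc y).mul_right

/-- Self-adjointness of `dX ∘ pinvY` on smooth compactly supported functions. -/
lemma adjY {f g : ℝ × ℝ → ℂ} (hf : ContDiff ℝ (⊤ : ℕ∞) f) (hfc : HasCompactSupport f)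
    (hg : ContDiff ℝ (⊤ : ℕ∞) g) (hgc : HasCompactSupport g) :
    ∫ p : ℝ × ℝ, f p * dX (pinvY g) p = ∫ p : ℝ × ℝ, g p * dX (pinvY f) p := by
  rw [dX_pinvY_eq hg hgc, dX_pinvY_eq hf hfc]
  have hpf := contDiff_pX hf
  have hpfc := compactSupport_pX hfc
  have hpg := contDiff_pX hg
  have hpgc := compactSupport_pX hgc
  have hcpig : Continuous (pinvY g) := continuous_pinvY hg.continuous hgc
  have hcpipg : Continuous (pinvY (pX g)) := continuous_pinvY hpg.continuous hpgc
  have hcpipf : Continuous (pinvY (pX f)) := continuous_pinvY hpf.continuous hpfc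
  have hint1 : Integrable (fun p : ℝ × ℝ => f p * pinvY (pX g) p) :=
    (hf.continuous.mul hcpipg).integrable_of_hasCompactSupport hfc.mul_right
  have hint2 : Integrable (fun p : ℝ × ℝ => pX f p * pinvY g p) :=
    (hpf.continuous.mul hcpig).integrable_of_hasCompactSupport hpfc.mul_right
  have hint3 : Integrable (fun p : ℝ × ℝ => g p * pinvY (pX f) p) :=
    (hg.continuous.mul hcpipf).integrable_of_hasCompactSupport hgc.mul_right
  have stepA : ∫ p : ℝ × ℝ, f p * pinvY (pX g) p
      = -∫ p : ℝ × ℝ, pX f p * pinvY g p := by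
    rw [fubini2 _ hint1, fubini2 _ hint2, ← integral_neg]
    refine integral_congr_ae (Filter.Eventually.of_forall fun y => ?_)
    show (∫ x : ℝ, f (x, y) * pinvY (pX g) (x, y)) = -∫ x : ℝ, pX f (x, y) * pinvY g (x, y)
    refine integral_mul_deriv_eq_deriv_mul_of_integrable
      (u := fun x => f (x, y)) (u' := fun x => pX f (x, y))
      (v := fun x => pinvY g (x, y)) (v' := fun x => pinvY (pX g) (x, y))
      (fun x _ => hasDerivAt_pX hf x y) (fun x _ => hasDerivAt_pinvY' hg hgc x y)
      ?_ ?_ ?_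
    · exact ((hf.continuous.comp (continuous_id.prodMk continuous_const)).mul
        (hcpipg.comp (continuous_id.prodMk continuous_const))).integrable_of_hasCompactSupport
        (sliceX_compactSupport hfc y).mul_right
    · exact ((hpf.continuous.comp (continuous_id.prodMk continuous_const)).mul
        (hcpig.comp (continuous_id.prodMk continuous_const))).integrable_of_hasCompactSupport
        (sliceX_compactSupport hpfc y).mul_right
    · exact ((hf.continuous.comp (continuous_id.prodMk continuous_const)).mul
        (hcpig.comp (continuous_id.prodMk continuous_const))).integrable_of_hasCompactSupport
        (sliceX_compactSupport hfc y).mul_right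
  have stepB : ∫ p : ℝ × ℝ, pX f p * pinvY g p
      = -∫ p : ℝ × ℝ, g p * pinvY (pX f) p := by
    rw [fubini1 _ hint2, fubini1 _ hint3, ← integral_neg]
    refine integral_congr_ae (Filter.Eventually.of_forall fun x => ?_)
    show (∫ y : ℝ, pX f (x, y) * pinvY g (x, y)) = -∫ y : ℝ, g (x, y) * pinvY (pX f) (x, y)
    have e1 : (fun y => pX f (x, y) * pinvY g (x, y))
        = fun y => pinv (fun s => g (x, s)) y * (fun s => pX f (x, s)) y :=
      funext fun y => mul_comm _ _
    have key := pinv_adjoint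
      (hg.continuous.comp (continuous_const.prodMk continuous_id))
      (sliceY_compactSupport hgc x)
      (hpf.continuous.comp (continuous_const.prodMk continuous_id))
      (sliceY_compactSupport hpfc x)
    calc ∫ y, pX f (x, y) * pinvY g (x, y)
        = ∫ y, pinv (fun s => g (x, s)) y * pX f (x, y) := by rw [e1]
      _ = -∫ y, g (x, y) * pinv (fun s => pX f (x, s)) y := key
      _ = -∫ y, g (x, y) * pinvY (pX f) (x, y) := rfl
  rw [stepA, stepB, neg_neg]

lemma dY_pinvX_as_swap (g : ℝ × ℝ → ℂ) (p : ℝ × ℝ) :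
    dY (pinvX g) p = dX (pinvY (g ∘ Prod.swap)) p.swap := rfl

lemma continuous_dX_pinvY {g : ℝ × ℝ → ℂ} (hg : ContDiff ℝ (⊤ : ℕ∞) g)
    (hgc : HasCompactSupport g) : Continuous (dX (pinvY g)) := by
  rw [dX_pinvY_eq hg hgc]
  exact continuous_pinvY (continuous_pX hg) (compactSupport_pX hgc)

lemma continuous_dY_pinvX {g : ℝ × ℝ → ℂ} (hg : ContDiff ℝ (⊤ : ℕ∞) g)
    (hgc : HasCompactSupport g) : Continuous (dY (pinvX g)) := by
  have h : Continuous (dX (pinvY (g ∘ Prod.swap))) :=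
    continuous_dX_pinvY (contDiff_swap hg) (compactSupport_swap hgc)
  exact (h.comp continuous_swap).congr fun p => (dY_pinvX_as_swap g p).symm

lemma continuous_T {g : ℝ × ℝ → ℂ} (hg : ContDiff ℝ (⊤ : ℕ∞) g)
    (hgc : HasCompactSupport g) : Continuous (T g) :=
  (continuous_dX_pinvY hg hgc).add (continuous_dY_pinvX hg hgc)

/-- Self-adjointness of `T` on smooth compactly supported functions. -/
lemma adjT {f g : ℝ × ℝ → ℂ} (hf : ContDiff ℝ (⊤ : ℕ∞) f) (hfc : HasCompactSupport f)
    (hg : ContDiff ℝ (⊤ : ℕ∞) g) (hgc : HasCompactSupport g) :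
    ∫ p : ℝ × ℝ, f p * T g p = ∫ p : ℝ × ℝ, g p * T f p := by
  have hint : ∀ (a b : ℝ × ℝ → ℂ), ContDiff ℝ (⊤ : ℕ∞) a → HasCompactSupport a → ContDiff ℝ (⊤ : ℕ∞) b →
      HasCompactSupport b → Integrable (fun p : ℝ × ℝ => a p * dX (pinvY b) p) :=
    fun a b ha hac hb hbc =>
      (ha.continuous.mul (continuous_dX_pinvY hb hbc)).integrable_of_hasCompactSupport
        hac.mul_right
  have hint' : ∀ (a b : ℝ × ℝ → ℂ), ContDiff ℝ (⊤ : ℕ∞) a → HasCompactSupport a → ContDiff ℝ (⊤ : ℕ∞) b →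
      HasCompactSupport b → Integrable (fun p : ℝ × ℝ => a p * dY (pinvX b) p) :=
    fun a b ha hac hb hbc =>
      (ha.continuous.mul (continuous_dY_pinvX hb hbc)).integrable_of_hasCompactSupport
        hac.mul_right
  have e1 : ∫ p : ℝ × ℝ, f p * T g p
      = (∫ p : ℝ × ℝ, f p * dX (pinvY g) p) + ∫ p : ℝ × ℝ, f p * dY (pinvX g) p := by
    rw [← integral_add (hint f g hf hfc hg hgc) (hint' f g hf hfc hg hgc)]
    refine integral_congr_ae (Filter.Eventually.of_forall fun p => ?_)
    show f p * T g p = _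
    rw [T]; ring
  have e2 : ∫ p : ℝ × ℝ, g p * T f p
      = (∫ p : ℝ × ℝ, g p * dX (pinvY f) p) + ∫ p : ℝ × ℝ, g p * dY (pinvX f) p := by
    rw [← integral_add (hint g f hg hgc hf hfc) (hint' g f hg hgc hf hfc)]
    refine integral_congr_ae (Filter.Eventually.of_forall fun p => ?_)
    show g p * T f p = _
    rw [T]; ring
  rw [e1, e2]
  congr 1
  · exact adjY hf hfc hg hgc
  · -- swap argument
    have swap1 : ∫ p : ℝ × ℝ, f p * dY (pinvX g) p
        = ∫ p : ℝ × ℝ, (f ∘ Prod.swap) p * dX (pinvY (g ∘ Prod.swap)) p := by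
      rw [← integral_swap_eq (fun p : ℝ × ℝ =>
        (f ∘ Prod.swap) p * dX (pinvY (g ∘ Prod.swap)) p)]
      refine integral_congr_ae (Filter.Eventually.of_forall fun p => ?_)
      show f p * dY (pinvX g) p
          = (f ∘ Prod.swap) p.swap * dX (pinvY (g ∘ Prod.swap)) p.swap
      rw [dY_pinvX_as_swap]
      simp [Function.comp]
    have swap2 : ∫ p : ℝ × ℝ, g p * dY (pinvX f) p
        = ∫ p : ℝ × ℝ, (g ∘ Prod.swap) p * dX (pinvY (f ∘ Prod.swap)) p := by
      rw [← integral_swap_eq (fun p : ℝ × ℝ =>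
        (g ∘ Prod.swap) p * dX (pinvY (f ∘ Prod.swap)) p)]
      refine integral_congr_ae (Filter.Eventually.of_forall fun p => ?_)
      show g p * dY (pinvX f) p
          = (g ∘ Prod.swap) p.swap * dX (pinvY (f ∘ Prod.swap)) p.swap
      rw [dY_pinvX_as_swap]
      simp [Function.comp]
    rw [swap1, swap2]
    exact adjY (contDiff_swap hf) (compactSupport_swap hfc)
      (contDiff_swap hg) (compactSupport_swap hgc)

lemma pinv_add_mul {a b : ℝ → ℂ} (ha : Integrable a) (hb : Integrable b) (c : ℂ) (y : ℝ) :
    pinv (fun s => a s + c * b s) y = pinv a y + c * pinv b y := by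
  unfold pinv
  rw [integral_add ha.integrableOn ((hb.const_mul c).integrableOn),
    integral_add ha.integrableOn ((hb.const_mul c).integrableOn),
    integral_const_mul, integral_const_mul]
  ring

lemma pinvY_add_mul {F G : ℝ × ℝ → ℂ} (hF : Continuous F) (hFc : HasCompactSupport F)
    (hG : Continuous G) (hGc : HasCompactSupport G) (c : ℂ) (p : ℝ × ℝ) :
    pinvY (fun q => F q + c * G q) p = pinvY F p + c * pinvY G p :=
  pinv_add_mul (sliceY_integrable hF hFc p.1) (sliceY_integrable hG hGc p.1) c p.2

lemma dX_pinvY_add {F G : ℝ × ℝ → ℂ} (hF : ContDiff ℝ (⊤ : ℕ∞) F) (hFc : HasCompactSupport F)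
    (hG : ContDiff ℝ (⊤ : ℕ∞) G) (hGc : HasCompactSupport G) (c : ℂ) (p : ℝ × ℝ) :
    dX (pinvY (fun q => F q + c * G q)) p = dX (pinvY F) p + c * dX (pinvY G) p := by
  have hd : HasDerivAt (fun t => pinvY (fun q => F q + c * G q) (t, p.2))
      (pinvY (pX F) (p.1, p.2) + c * pinvY (pX G) (p.1, p.2)) p.1 := by
    refine HasDerivAt.congr_of_eventuallyEq
      ((hasDerivAt_pinvY' hF hFc p.1 p.2).add
        ((hasDerivAt_pinvY' hG hGc p.1 p.2).const_mul c))
      (Filter.Eventually.of_forall fun t =>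
        pinvY_add_mul hF.continuous hFc hG.continuous hGc c (t, p.2))
  rw [dX_pinvY_eq hF hFc, dX_pinvY_eq hG hGc]
  exact hd.deriv

lemma dY_pinvX_add {F G : ℝ × ℝ → ℂ} (hF : ContDiff ℝ (⊤ : ℕ∞) F) (hFc : HasCompactSupport F)
    (hG : ContDiff ℝ (⊤ : ℕ∞) G) (hGc : HasCompactSupport G) (c : ℂ) (p : ℝ × ℝ) :
    dY (pinvX (fun q => F q + c * G q)) p = dY (pinvX F) p + c * dY (pinvX G) p := by
  have h := dX_pinvY_add (contDiff_swap hF) (compactSupport_swap hFc)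
    (contDiff_swap hG) (compactSupport_swap hGc) c p.swap
  have e : (fun q => F q + c * G q) ∘ Prod.swap
      = fun q => (F ∘ Prod.swap) q + c * (G ∘ Prod.swap) q := rfl
  rw [dY_pinvX_as_swap, dY_pinvX_as_swap, dY_pinvX_as_swap, e]
  exact h

lemma T_add_mul {F G : ℝ × ℝ → ℂ} (hF : ContDiff ℝ (⊤ : ℕ∞) F) (hFc : HasCompactSupport F)
    (hG : ContDiff ℝ (⊤ : ℕ∞) G) (hGc : HasCompactSupport G) (c : ℂ) (p : ℝ × ℝ) :
    T (fun q => F q + c * G q) p = T F p + c * T G p := by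
  rw [T, T, T, dX_pinvY_add hF hFc hG hGc c p, dY_pinvX_add hF hFc hG hGc c p]
  ring

lemma dX_add_mul {F G : ℝ × ℝ → ℂ} (hF : ContDiff ℝ (⊤ : ℕ∞) F) (hG : ContDiff ℝ (⊤ : ℕ∞) G)
    (c : ℂ) (p : ℝ × ℝ) :
    dX (fun q => F q + c * G q) p = dX F p + c * dX G p := by
  have hd : HasDerivAt (fun t => F (t, p.2) + c * G (t, p.2))
      (pX F (p.1, p.2) + c * pX G (p.1, p.2)) p.1 :=
    (hasDerivAt_pX hF p.1 p.2).add ((hasDerivAt_pX hG p.1 p.2).const_mul c)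
  rw [dX_eq_pX hF, dX_eq_pX hG]
  exact hd.deriv

lemma dY_add_mul {F G : ℝ × ℝ → ℂ} (hF : ContDiff ℝ (⊤ : ℕ∞) F) (hG : ContDiff ℝ (⊤ : ℕ∞) G)
    (c : ℂ) (p : ℝ × ℝ) :
    dY (fun q => F q + c * G q) p = dY F p + c * dY G p := by
  have h := dX_add_mul (contDiff_swap hF) (contDiff_swap hG) c p.swap
  exact h

lemma dY_as_swap (g : ℝ × ℝ → ℂ) (p : ℝ × ℝ) :
    dY g p = dX (g ∘ Prod.swap) p.swap := rfl

/-- partial derivative in the second coordinate, via `fderiv`. -/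
noncomputable def pY (g : ℝ × ℝ → ℂ) : ℝ × ℝ → ℂ := fun p => fderiv ℝ g p (0, 1)

lemma hasDerivAt_pY {g : ℝ × ℝ → ℂ} (hg : ContDiff ℝ (⊤ : ℕ∞) g) (x y : ℝ) :
    HasDerivAt (fun t => g (x, t)) (pY g (x, y)) y := by
  have hι : HasDerivAt (fun t : ℝ => (x, t)) ((0 : ℝ), (1 : ℝ)) y :=
    (hasDerivAt_const y x).prodMk (hasDerivAt_id y)
  exact ((hg.differentiable (by simp) (x, y)).hasFDerivAt).comp_hasDerivAt y hι

lemma dY_eq_pY {g : ℝ × ℝ → ℂ} (hg : ContDiff ℝ (⊤ : ℕ∞) g) : dY g = pY g :=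
  funext fun p => (hasDerivAt_pY hg p.1 p.2).deriv

lemma contDiff_pY {g : ℝ × ℝ → ℂ} (hg : ContDiff ℝ (⊤ : ℕ∞) g) : ContDiff ℝ (⊤ : ℕ∞) (pY g) :=
  (hg.fderiv_right (by simp)).clm_apply contDiff_const

lemma compactSupport_pY {g : ℝ × ℝ → ℂ} (hgc : HasCompactSupport g) :
    HasCompactSupport (pY g) :=
  hgc.fderiv_apply ℝ (0, 1)

/-- Integration by parts in the second variable. -/
lemma partsY {f h : ℝ × ℝ → ℂ} (hf : ContDiff ℝ (⊤ : ℕ∞) f) (hfc : HasCompactSupport f)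
    (hh : ContDiff ℝ (⊤ : ℕ∞) h) (hhc : HasCompactSupport h) :
    ∫ p : ℝ × ℝ, pY f p * pY h p = -∫ p : ℝ × ℝ, pY (pY f) p * h p := by
  have hpf := contDiff_pY hf
  have hpfc := compactSupport_pY hfc
  have hppf := contDiff_pY hpf
  have hppfc := compactSupport_pY hpfc
  have hph := contDiff_pY hh
  have hphc := compactSupport_pY hhc
  have hint1 : Integrable (fun p : ℝ × ℝ => pY f p * pY h p) :=
    (hpf.continuous.mul hph.continuous).integrable_of_hasCompactSupport hpfc.mul_right
  have hint2 : Integrable (fun p : ℝ × ℝ => pY (pY f) p * h p) :=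
    (hppf.continuous.mul hh.continuous).integrable_of_hasCompactSupport hppfc.mul_right
  rw [fubini1 _ hint1, fubini1 _ hint2, ← integral_neg]
  refine integral_congr_ae (Filter.Eventually.of_forall fun x => ?_)
  show (∫ y : ℝ, pY f (x, y) * pY h (x, y)) = -∫ y : ℝ, pY (pY f) (x, y) * h (x, y)
  refine integral_mul_deriv_eq_deriv_mul_of_integrable
    (u := fun y => pY f (x, y)) (u' := fun y => pY (pY f) (x, y))
    (v := fun y => h (x, y)) (v' := fun y => pY h (x, y))
    (fun y _ => hasDerivAt_pY hpf x y) (fun y _ => hasDerivAt_pY hh x y)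
    ?_ ?_ ?_
  · exact ((hpf.continuous.comp (continuous_const.prodMk continuous_id)).mul
      (hph.continuous.comp (continuous_const.prodMk continuous_id))).integrable_of_hasCompactSupport
      (sliceY_compactSupport hpfc x).mul_right
  · exact ((hppf.continuous.comp (continuous_const.prodMk continuous_id)).mul
      (hh.continuous.comp (continuous_const.prodMk continuous_id))).integrable_of_hasCompactSupport
      (sliceY_compactSupport hppfc x).mul_right
  · exact ((hpf.continuous.comp (continuous_const.prodMk continuous_id)).mul
      (hh.continuous.comp (continuous_const.prodMk continuous_id))).integrable_of_hasCompactSupport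
      (sliceY_compactSupport hpfc x).mul_right

end NLSaux

open NLSaux in
/-- Variational derivative of the NLS Hamiltonian with respect to `u₂`:
`δH/δu₂ = −Δu₁ − (r+s)u₁ − 2u₁·T(u₁u₂)`. -/
theorem NLS_variational_derivative_u₂ (u₁ u₂ h : ℝ × ℝ → ℂ)
    (hu₁ : ContDiff ℝ (⊤ : ℕ∞) u₁) (hu₁c : HasCompactSupport u₁)
    (hu₂ : ContDiff ℝ (⊤ : ℕ∞) u₂) (hu₂c : HasCompactSupport u₂)
    (hh : ContDiff ℝ (⊤ : ℕ∞) h) (hhc : HasCompactSupport h)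
    (r s : ℝ → ℝ) (hr : Continuous r) (hs : Continuous s) :
    HasDerivAt (fun ε : ℝ => Ham r s u₁ (fun p => u₂ p + (ε : ℂ) * h p))
      (∫ p : ℝ × ℝ,
        (-(dX (dX u₁) p + dY (dY u₁) p)
          - ((r p.2 : ℂ) + (s p.1 : ℂ)) * u₁ p
          - 2 * u₁ p * T (fun q => u₁ q * u₂ q) p) * h p) 0 := by
  set F : ℝ × ℝ → ℂ := fun q => u₁ q * u₂ q with hFdef
  set G : ℝ × ℝ → ℂ := fun q => u₁ q * h q with hGdef
  have hF : ContDiff ℝ (⊤ : ℕ∞) F := hu₁.mul hu₂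
  have hFc : HasCompactSupport F := hu₁c.mul_right
  have hG : ContDiff ℝ (⊤ : ℕ∞) G := hu₁.mul hh
  have hGc : HasCompactSupport G := hu₁c.mul_right
  have cTF : Continuous (T F) := continuous_T hF hFc
  have cTG : Continuous (T G) := continuous_T hG hGc
  have crs : Continuous (fun p : ℝ × ℝ => ((r p.2 : ℂ) + (s p.1 : ℂ))) :=
    (Complex.continuous_ofReal.comp (hr.comp continuous_snd)).add
      (Complex.continuous_ofReal.comp (hs.comp continuous_fst))
  have cdXu₁ : Continuous (dX u₁) := by
    rw [dX_eq_pX hu₁]; exact (contDiff_pX hu₁).continuous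
  have csdXu₁ : HasCompactSupport (dX u₁) := by
    rw [dX_eq_pX hu₁]; exact compactSupport_pX hu₁c
  have cdYu₁ : Continuous (dY u₁) := by
    rw [dY_eq_pY hu₁]; exact (contDiff_pY hu₁).continuous
  have csdYu₁ : HasCompactSupport (dY u₁) := by
    rw [dY_eq_pY hu₁]; exact compactSupport_pY hu₁c
  have cdXu₂ : Continuous (dX u₂) := by
    rw [dX_eq_pX hu₂]; exact (contDiff_pX hu₂).continuous
  have cdYu₂ : Continuous (dY u₂) := by
    rw [dY_eq_pY hu₂]; exact (contDiff_pY hu₂).continuous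
  have cdXh : Continuous (dX h) := by
    rw [dX_eq_pX hh]; exact (contDiff_pX hh).continuous
  have cdYh : Continuous (dY h) := by
    rw [dY_eq_pY hh]; exact (contDiff_pY hh).continuous
  have eddX : dX (dX u₁) = pX (pX u₁) := by
    rw [dX_eq_pX hu₁, dX_eq_pX (contDiff_pX hu₁)]
  have eddY : dY (dY u₁) = pY (pY u₁) := by
    rw [dY_eq_pY hu₁, dY_eq_pY (contDiff_pY hu₁)]
  have cdXdXu₁ : Continuous (dX (dX u₁)) := by
    rw [eddX]; exact (contDiff_pX (contDiff_pX hu₁)).continuous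
  have cdYdYu₁ : Continuous (dY (dY u₁)) := by
    rw [eddY]; exact (contDiff_pY (contDiff_pY hu₁)).continuous
  -- the three coefficient functions
  set a : ℝ × ℝ → ℂ := fun p => dX u₁ p * dX u₂ p + dY u₁ p * dY u₂ p
      - u₁ p * ((r p.2 : ℂ) + (s p.1 : ℂ)) * u₂ p - F p * T F p with hadef
  set b : ℝ × ℝ → ℂ := fun p => dX u₁ p * dX h p + dY u₁ p * dY h p
      - u₁ p * ((r p.2 : ℂ) + (s p.1 : ℂ)) * h p - G p * T F p - F p * T G p with hbdef
  set c : ℝ × ℝ → ℂ := fun p => -(G p * T G p) with hcdef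
  -- integrability of all pieces
  have iA1 : Integrable (fun p : ℝ × ℝ => dX u₁ p * dX u₂ p) :=
    (cdXu₁.mul cdXu₂).integrable_of_hasCompactSupport csdXu₁.mul_right
  have iA2 : Integrable (fun p : ℝ × ℝ => dY u₁ p * dY u₂ p) :=
    (cdYu₁.mul cdYu₂).integrable_of_hasCompactSupport csdYu₁.mul_right
  have iA3 : Integrable (fun p : ℝ × ℝ => u₁ p * ((r p.2 : ℂ) + (s p.1 : ℂ)) * u₂ p) :=
    ((hu₁.continuous.mul crs).mul hu₂.continuous).integrable_of_hasCompactSupport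
      hu₁c.mul_right.mul_right
  have iA4 : Integrable (fun p : ℝ × ℝ => F p * T F p) :=
    (hF.continuous.mul cTF).integrable_of_hasCompactSupport hFc.mul_right
  have iB1 : Integrable (fun p : ℝ × ℝ => dX u₁ p * dX h p) :=
    (cdXu₁.mul cdXh).integrable_of_hasCompactSupport csdXu₁.mul_right
  have iB2 : Integrable (fun p : ℝ × ℝ => dY u₁ p * dY h p) :=
    (cdYu₁.mul cdYh).integrable_of_hasCompactSupport csdYu₁.mul_right
  have iB3 : Integrable (fun p : ℝ × ℝ => u₁ p * ((r p.2 : ℂ) + (s p.1 : ℂ)) * h p) :=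
    ((hu₁.continuous.mul crs).mul hh.continuous).integrable_of_hasCompactSupport
      hu₁c.mul_right.mul_right
  have iB4 : Integrable (fun p : ℝ × ℝ => G p * T F p) :=
    (hG.continuous.mul cTF).integrable_of_hasCompactSupport hGc.mul_right
  have iB5 : Integrable (fun p : ℝ × ℝ => F p * T G p) :=
    (hF.continuous.mul cTG).integrable_of_hasCompactSupport hFc.mul_right
  have iC1 : Integrable (fun p : ℝ × ℝ => G p * T G p) :=
    (hG.continuous.mul cTG).integrable_of_hasCompactSupport hGc.mul_right
  have ia : Integrable a := by rw [hadef]; exact ((iA1.add iA2).sub iA3).sub iA4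
  have ib : Integrable b := by rw [hbdef]; exact (((iB1.add iB2).sub iB3).sub iB4).sub iB5
  have ic : Integrable c := by rw [hcdef]; exact iC1.neg
  -- the Hamiltonian is a quadratic polynomial in ε
  have key : ∀ ε : ℝ, Ham r s u₁ (fun p => u₂ p + (ε : ℂ) * h p)
      = (∫ p, a p) + (ε : ℂ) * (∫ p, b p) + (ε : ℂ) ^ 2 * ∫ p, c p := by
    intro ε
    have hTlin : ∀ p, T (fun q => u₁ q * (u₂ q + (ε : ℂ) * h q)) p
        = T F p + (ε : ℂ) * T G p := by
      intro p
      have e : (fun q => u₁ q * (u₂ q + (ε : ℂ) * h q))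
          = fun q => F q + (ε : ℂ) * G q := by
        funext q; rw [hFdef, hGdef]; ring
      rw [e]
      exact T_add_mul hF hFc hG hGc _ p
    have hdX : ∀ p, dX (fun q => u₂ q + (ε : ℂ) * h q) p = dX u₂ p + (ε : ℂ) * dX h p :=
      dX_add_mul hu₂ hh _
    have hdY : ∀ p, dY (fun q => u₂ q + (ε : ℂ) * h q) p = dY u₂ p + (ε : ℂ) * dY h p :=
      dY_add_mul hu₂ hh _
    rw [Ham]
    have iab : Integrable (fun p : ℝ × ℝ => a p + (ε : ℂ) * b p) :=
      ia.add (ib.const_mul _)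
    have icc : Integrable (fun p : ℝ × ℝ => (ε : ℂ) ^ 2 * c p) := ic.const_mul _
    have ibb : Integrable (fun p : ℝ × ℝ => (ε : ℂ) * b p) := ib.const_mul _
    have step2 : (∫ p : ℝ × ℝ, (a p + (ε : ℂ) * b p + (ε : ℂ) ^ 2 * c p))
        = (∫ p, a p) + (ε : ℂ) * (∫ p, b p) + (ε : ℂ) ^ 2 * ∫ p, c p := by
      rw [integral_add iab icc, integral_add ia ibb, integral_const_mul, integral_const_mul]
    refine Eq.trans ?_ step2
    refine integral_congr_ae (Filter.Eventually.of_forall fun p => ?_)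
    show dX u₁ p * dX (fun q => u₂ q + (ε : ℂ) * h q) p
        + dY u₁ p * dY (fun q => u₂ q + (ε : ℂ) * h q) p
        - u₁ p * ((r p.2 : ℂ) + (s p.1 : ℂ)) * (u₂ p + (ε : ℂ) * h p)
        - u₁ p * (u₂ p + (ε : ℂ) * h p) * T (fun q => u₁ q * (u₂ q + (ε : ℂ) * h q)) p
        = a p + (ε : ℂ) * b p + (ε : ℂ) ^ 2 * c p
    rw [hdX p, hdY p, hTlin p, hadef, hbdef, hcdef]
    simp only [hFdef, hGdef]
    ring
  -- identify the linear coefficient with the claimed variational derivative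
  have I1 : (∫ p : ℝ × ℝ, dX u₁ p * dX h p) = -∫ p : ℝ × ℝ, dX (dX u₁) p * h p := by
    rw [eddX, dX_eq_pX hu₁, dX_eq_pX hh]
    exact partsX hu₁ hu₁c hh hhc
  have I2 : (∫ p : ℝ × ℝ, dY u₁ p * dY h p) = -∫ p : ℝ × ℝ, dY (dY u₁) p * h p := by
    rw [eddY, dY_eq_pY hu₁, dY_eq_pY hh]
    exact partsY hu₁ hu₁c hh hhc
  have I3 : (∫ p : ℝ × ℝ, F p * T G p) = ∫ p : ℝ × ℝ, G p * T F p :=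
    adjT hF hFc hG hGc
  have iP : Integrable (fun p : ℝ × ℝ => dX (dX u₁) p * h p) :=
    (cdXdXu₁.mul hh.continuous).integrable_of_hasCompactSupport hhc.mul_left
  have iQ : Integrable (fun p : ℝ × ℝ => dY (dY u₁) p * h p) :=
    (cdYdYu₁.mul hh.continuous).integrable_of_hasCompactSupport hhc.mul_left
  have hbsplit : (∫ p, b p)
      = (∫ p : ℝ × ℝ, dX u₁ p * dX h p) + (∫ p : ℝ × ℝ, dY u₁ p * dY h p)
        - (∫ p : ℝ × ℝ, u₁ p * ((r p.2 : ℂ) + (s p.1 : ℂ)) * h p)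
        - (∫ p : ℝ × ℝ, G p * T F p) - ∫ p : ℝ × ℝ, F p * T G p := by
    have j12 : Integrable (fun p : ℝ × ℝ => dX u₁ p * dX h p + dY u₁ p * dY h p) :=
      iB1.add iB2
    have j123 : Integrable (fun p : ℝ × ℝ => dX u₁ p * dX h p + dY u₁ p * dY h p
        - u₁ p * ((r p.2 : ℂ) + (s p.1 : ℂ)) * h p) := j12.sub iB3
    have j1234 : Integrable (fun p : ℝ × ℝ => dX u₁ p * dX h p + dY u₁ p * dY h p
        - u₁ p * ((r p.2 : ℂ) + (s p.1 : ℂ)) * h p - G p * T F p) := j123.sub iB4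
    rw [hbdef]
    rw [integral_sub j1234 iB5, integral_sub j123 iB4, integral_sub j12 iB3,
      integral_add iB1 iB2]
  have htsplit : (∫ p : ℝ × ℝ,
        (-(dX (dX u₁) p + dY (dY u₁) p)
          - ((r p.2 : ℂ) + (s p.1 : ℂ)) * u₁ p - 2 * u₁ p * T F p) * h p)
      = (-(∫ p : ℝ × ℝ, dX (dX u₁) p * h p)) - (∫ p : ℝ × ℝ, dY (dY u₁) p * h p)
        - (∫ p : ℝ × ℝ, u₁ p * ((r p.2 : ℂ) + (s p.1 : ℂ)) * h p)
        - 2 * ∫ p : ℝ × ℝ, G p * T F p := by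
    have e : ∀ p : ℝ × ℝ, (-(dX (dX u₁) p + dY (dY u₁) p)
        - ((r p.2 : ℂ) + (s p.1 : ℂ)) * u₁ p - 2 * u₁ p * T F p) * h p
        = -(dX (dX u₁) p * h p) - dY (dY u₁) p * h p
          - u₁ p * ((r p.2 : ℂ) + (s p.1 : ℂ)) * h p - 2 * (G p * T F p) := by
      intro p; rw [hGdef]; ring
    rw [integral_congr_ae (Filter.Eventually.of_forall e)]
    have k1 : Integrable (fun p : ℝ × ℝ => -(dX (dX u₁) p * h p)) := iP.neg
    have k12 : Integrable (fun p : ℝ × ℝ => -(dX (dX u₁) p * h p)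
        - dY (dY u₁) p * h p) := k1.sub iQ
    have k123 : Integrable (fun p : ℝ × ℝ => -(dX (dX u₁) p * h p)
        - dY (dY u₁) p * h p - u₁ p * ((r p.2 : ℂ) + (s p.1 : ℂ)) * h p) := k12.sub iB3
    have k4 : Integrable (fun p : ℝ × ℝ => 2 * (G p * T F p)) := iB4.const_mul 2
    rw [integral_sub k123 k4, integral_sub k12 iB3, integral_sub k1 iQ,
      integral_neg, integral_const_mul]
  have hBtgt : (∫ p, b p) = ∫ p : ℝ × ℝ,
      (-(dX (dX u₁) p + dY (dY u₁) p)
        - ((r p.2 : ℂ) + (s p.1 : ℂ)) * u₁ p - 2 * u₁ p * T F p) * h p := by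
    rw [hbsplit, htsplit, I1, I2, I3]
    ring
  -- the polynomial has derivative `∫ b` at `0`
  have h1 : HasDerivAt (fun ε : ℝ => (ε : ℂ)) 1 0 := by
    simpa using (hasDerivAt_id (0 : ℝ)).ofReal_comp
  have hpoly : HasDerivAt
      (fun ε : ℝ => (∫ p, a p) + (ε : ℂ) * (∫ p, b p) + (ε : ℂ) ^ 2 * ∫ p, c p)
      (∫ p, b p) 0 := by
    have hpow : HasDerivAt (fun ε : ℝ => (ε : ℂ) ^ 2) 0 0 := by
      have hsq : HasDerivAt (fun ε : ℝ => (ε : ℂ) * (ε : ℂ)) 0 0 := by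
        simpa [Pi.mul_def] using h1.mul h1
      refine hsq.congr_of_eventuallyEq (Filter.Eventually.of_forall fun ε => ?_)
      show (ε : ℂ) ^ 2 = (ε : ℂ) * (ε : ℂ)
      ring
    have h4 := ((hasDerivAt_const (0 : ℝ) (∫ p, a p)).add
      (h1.mul_const (∫ p, b p))).add (hpow.mul_const (∫ p, c p))
    have e : ((0:ℂ) + 1 * ∫ p, b p) + 0 * ∫ p, c p = ∫ p, b p := by norm_num
    rw [e] at h4
    exact h4
  rw [← hBtgt]
  exact hpoly.congr_of_eventuallyEq (Filter.Eventually.of_forall fun ε => key ε)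
end

section
/- Theorem 1 (Hamiltonian form of the (2+1) nonlinear Schrödinger equation, weak form): let u : ℝ × ℝ² → ℂ, (t,x,y) ↦ u(t,x,y), be smooth and compactly supported in (x,y) for every t, let r, s : ℝ → ℝ be continuous, set u₁ = u, u₂ = conj(u), v₁ = r(y) + 2∂_y(∂_x^{-1}(u₁u₂)), v₂ = s(x) + 2∂_x(∂_y^{-1}(u₁u₂)), and suppose u satisfies i·∂u/∂t + Δu + (v₁+v₂)u = 0 on ℝ × ℝ². Then for every t ∈ ℝ and every smooth compactly supported h : ℝ² → ℂ, the derivative at ε = 0 of the real-variable function ε ↦ H(u₁(t,·), u₂(t,·) + εh) equals i·∬_{ℝ²} (∂u/∂t)(t,x,y)·h(x,y) dx dy; that is, ∂u₁/∂t = −i δH/δu₂. -/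
open MeasureTheory

open Set Filter

section lemmas
variable {g : ℝ × ℝ → ℂ} {f : ℝ → ℂ}

lemma contDiff_sectX (hg : ContDiff ℝ (⊤ : ℕ∞) g) (y : ℝ) : ContDiff ℝ (⊤ : ℕ∞) (fun x => g (x, y)) :=
  hg.comp (contDiff_id.prodMk contDiff_const)

lemma contDiff_sectY (hg : ContDiff ℝ (⊤ : ℕ∞) g) (x : ℝ) : ContDiff ℝ (⊤ : ℕ∞) (fun y => g (x, y)) :=
  hg.comp (contDiff_const.prodMk contDiff_id)

lemma hcs_sectX (hg : HasCompactSupport g) (y : ℝ) : HasCompactSupport (fun x => g (x, y)) := by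
  apply HasCompactSupport.intro (hg.image continuous_fst)
  intro x hx
  by_contra hne
  exact hx ⟨(x, y), subset_tsupport g hne, rfl⟩

lemma hcs_sectY (hg : HasCompactSupport g) (x : ℝ) : HasCompactSupport (fun y => g (x, y)) := by
  apply HasCompactSupport.intro (hg.image continuous_snd)
  intro y hy
  by_contra hne
  exact hy ⟨(x, y), subset_tsupport g hne, rfl⟩

lemma dX_eq_fderiv (hg : ContDiff ℝ (⊤ : ℕ∞) g) (p : ℝ × ℝ) :
    dX g p = fderiv ℝ g p ((1 : ℝ), (0 : ℝ)) := by
  have h1 : HasDerivAt (fun x : ℝ => (x, p.2)) ((1 : ℝ), (0 : ℝ)) p.1 :=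
    (hasDerivAt_id p.1).prodMk (hasDerivAt_const _ _)
  have h2 := ((hg.differentiable (by simp)) (p.1, p.2)).hasFDerivAt.comp_hasDerivAt p.1 h1
  simpa [dX, Function.comp_def] using h2.deriv

lemma dY_eq_fderiv (hg : ContDiff ℝ (⊤ : ℕ∞) g) (p : ℝ × ℝ) :
    dY g p = fderiv ℝ g p ((0 : ℝ), (1 : ℝ)) := by
  have h1 : HasDerivAt (fun y : ℝ => (p.1, y)) ((0 : ℝ), (1 : ℝ)) p.2 :=
    (hasDerivAt_const _ _).prodMk (hasDerivAt_id p.2)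
  have h2 := ((hg.differentiable (by simp)) (p.1, p.2)).hasFDerivAt.comp_hasDerivAt p.2 h1
  simpa [dY, Function.comp_def] using h2.deriv

lemma hasDerivAt_dX (hg : ContDiff ℝ (⊤ : ℕ∞) g) (p : ℝ × ℝ) :
    HasDerivAt (fun x => g (x, p.2)) (dX g p) p.1 := by
  rw [dX_eq_fderiv hg p]
  have h1 : HasDerivAt (fun x : ℝ => (x, p.2)) ((1 : ℝ), (0 : ℝ)) p.1 :=
    (hasDerivAt_id p.1).prodMk (hasDerivAt_const _ _)
  have h2 := ((hg.differentiable (by simp)) (p.1, p.2)).hasFDerivAt.comp_hasDerivAt p.1 h1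
  simpa [Function.comp_def] using h2

lemma hasDerivAt_dY (hg : ContDiff ℝ (⊤ : ℕ∞) g) (p : ℝ × ℝ) :
    HasDerivAt (fun y => g (p.1, y)) (dY g p) p.2 := by
  rw [dY_eq_fderiv hg p]
  have h1 : HasDerivAt (fun y : ℝ => (p.1, y)) ((0 : ℝ), (1 : ℝ)) p.2 :=
    (hasDerivAt_const _ _).prodMk (hasDerivAt_id p.2)
  have h2 := ((hg.differentiable (by simp)) (p.1, p.2)).hasFDerivAt.comp_hasDerivAt p.2 h1
  simpa [Function.comp_def] using h2

lemma contDiff_dX (hg : ContDiff ℝ (⊤ : ℕ∞) g) : ContDiff ℝ (⊤ : ℕ∞) (dX g) := by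
  have : dX g = fun p => fderiv ℝ g p ((1 : ℝ), (0 : ℝ)) := funext fun p => dX_eq_fderiv hg p
  rw [this]
  exact (hg.fderiv_right (by simp)).clm_apply contDiff_const

lemma contDiff_dY (hg : ContDiff ℝ (⊤ : ℕ∞) g) : ContDiff ℝ (⊤ : ℕ∞) (dY g) := by
  have : dY g = fun p => fderiv ℝ g p ((0 : ℝ), (1 : ℝ)) := funext fun p => dY_eq_fderiv hg p
  rw [this]
  exact (hg.fderiv_right (by simp)).clm_apply contDiff_const

lemma hcs_dX (hg : HasCompactSupport g) : HasCompactSupport (dX g) := by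
  apply HasCompactSupport.intro hg
  intro p hp
  have h0 : ∀ᶠ x in nhds p.1, g (x, p.2) = 0 := by
    have : ∀ᶠ q in nhds p, g q = 0 := by
      have : (tsupport g)ᶜ ∈ nhds p := (isOpen_compl_iff.2 (isClosed_tsupport g)).mem_nhds hp
      filter_upwards [this] with q hq using image_eq_zero_of_notMem_tsupport hq
    exact (Continuous.prodMk continuous_id continuous_const).continuousAt this
  have : dX g p = deriv (fun _ : ℝ => (0 : ℂ)) p.1 := Filter.EventuallyEq.deriv_eq h0
  simpa using this

lemma hcs_dY (hg : HasCompactSupport g) : HasCompactSupport (dY g) := by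
  apply HasCompactSupport.intro hg
  intro p hp
  have h0 : ∀ᶠ y in nhds p.2, g (p.1, y) = 0 := by
    have : ∀ᶠ q in nhds p, g q = 0 := by
      have : (tsupport g)ᶜ ∈ nhds p := (isOpen_compl_iff.2 (isClosed_tsupport g)).mem_nhds hp
      filter_upwards [this] with q hq using image_eq_zero_of_notMem_tsupport hq
    exact (Continuous.prodMk continuous_const continuous_id).continuousAt this
  have : dY g p = deriv (fun _ : ℝ => (0 : ℂ)) p.2 := Filter.EventuallyEq.deriv_eq h0
  simpa using this

end lemmas

section pinv1d
variable {f g : ℝ → ℂ}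

lemma pinv_eq_Iio (hfi : Integrable f) (x : ℝ) :
    pinv f x = (∫ s in Set.Iio x, f s) - (1 / 2) * ∫ s, f s := by
  have h1 : (∫ s in Set.Iio x, f s) + ∫ s in Set.Ici x, f s = ∫ s, f s :=
    intervalIntegral.integral_Iio_add_Ici hfi.integrableOn hfi.integrableOn
  rw [pinv, ← integral_Ici_eq_integral_Ioi]
  linear_combination (-(1/2) : ℂ) * h1

lemma hasDerivAt_pinv (hf : Continuous f) (hfi : Integrable f) (x : ℝ) :
    HasDerivAt (pinv f) (f x) x := by
  have hrw : pinv f = fun y =>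
      ((∫ s in Set.Iio (0:ℝ), f s) - (1 / 2) * ∫ s, f s) + ∫ s in (0:ℝ)..y, f s := by
    funext y
    rw [pinv_eq_Iio hfi y]
    have h2 : ((∫ s in Set.Iic y, f s) - ∫ s in Set.Iic (0:ℝ), f s) = ∫ s in (0:ℝ)..y, f s :=
      intervalIntegral.integral_Iic_sub_Iic hfi.integrableOn hfi.integrableOn
    rw [integral_Iic_eq_integral_Iio, integral_Iic_eq_integral_Iio] at h2
    linear_combination h2
  rw [hrw]
  exact (intervalIntegral.integral_hasDerivAt_right hfi.intervalIntegrable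
      hf.stronglyMeasurable.stronglyMeasurableAtFilter hf.continuousAt).const_add _

lemma pinv_continuous (hf : Continuous f) (hfi : Integrable f) : Continuous (pinv f) :=
  continuous_iff_continuousAt.2 fun x => (hasDerivAt_pinv hf hfi x).continuousAt

lemma pinv_of_forall_ge (hfi : Integrable f) {R x : ℝ} (hR : ∀ s, R ≤ s → f s = 0)
    (hx : R ≤ x) : pinv f x = (1 / 2) * ∫ s, f s := by
  have h0 : (∫ s in Set.Ici x, f s) = 0 :=
    setIntegral_eq_zero_of_forall_eq_zero fun s hs => hR s (le_trans hx hs)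
  have h1 : (∫ s in Set.Iio x, f s) + ∫ s in Set.Ici x, f s = ∫ s, f s :=
    intervalIntegral.integral_Iio_add_Ici hfi.integrableOn hfi.integrableOn
  rw [pinv, ← integral_Ici_eq_integral_Ioi, h0]
  rw [h0, add_zero] at h1
  rw [h1]; ring

lemma pinv_of_forall_le (hfi : Integrable f) {R x : ℝ} (hR : ∀ s, s ≤ R → f s = 0)
    (hx : x ≤ R) : pinv f x = -((1 / 2) * ∫ s, f s) := by
  have h0 : (∫ s in Set.Iio x, f s) = 0 :=
    setIntegral_eq_zero_of_forall_eq_zero fun s hs => hR s (le_trans (le_of_lt hs) hx)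
  have h1 : (∫ s in Set.Iio x, f s) + ∫ s in Set.Ici x, f s = ∫ s, f s :=
    intervalIntegral.integral_Iio_add_Ici hfi.integrableOn hfi.integrableOn
  rw [pinv, ← integral_Ici_eq_integral_Ioi, h0]
  rw [h0, zero_add] at h1
  rw [h1]; ring

lemma tsupport_subset_Icc (hfc : HasCompactSupport f) :
    ∃ R : ℝ, 0 < R ∧ ∀ s, s ∉ Set.Icc (-R) R → f s = 0 := by
  obtain ⟨R, hR0, hR⟩ := hfc.isCompact.isBounded.subset_closedBall_lt 0 0
  refine ⟨R, hR0, fun s hs => ?_⟩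
  by_contra hne
  apply hs
  have := hR (subset_tsupport f hne)
  simpa [Real.closedBall_eq_Icc, zero_sub, zero_add] using this

/-- Anti-self-adjointness of `pinv` against compactly supported functions. -/
lemma integral_pinv_mul (hf : Continuous f) (hfc : HasCompactSupport f)
    (hg : Continuous g) (hgc : HasCompactSupport g) :
    ∫ x, pinv f x * g x = -∫ x, f x * pinv g x := by
  have hfi : Integrable f := hf.integrable_of_hasCompactSupport hfc
  have hgi : Integrable g := hg.integrable_of_hasCompactSupport hgc
  obtain ⟨R, hR0, hRf⟩ := tsupport_subset_Icc hfc
  obtain ⟨S, hS0, hSg⟩ := tsupport_subset_Icc hgc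
  set M := max R S with hM
  have hMf : ∀ s, s ∉ Set.Icc (-M) M → f s = 0 := fun s hs => hRf s
    (fun hmem => hs ⟨le_trans (neg_le_neg (le_max_left R S)) hmem.1,
      le_trans hmem.2 (le_max_left R S)⟩)
  have hMg : ∀ s, s ∉ Set.Icc (-M) M → g s = 0 := fun s hs => hSg s
    (fun hmem => hs ⟨le_trans (neg_le_neg (le_max_right R S)) hmem.1,
      le_trans hmem.2 (le_max_right R S)⟩)
  -- the product F*G is eventually constant at ±∞
  have htop : Tendsto (pinv f * pinv g) atTop
      (nhds (((1 / 2) * ∫ s, f s) * ((1 / 2) * ∫ s, g s))) := by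
    apply Tendsto.congr' _ tendsto_const_nhds
    filter_upwards [eventually_ge_atTop (M+1)] with x hx
    have h1 : pinv f x = (1 / 2) * ∫ s, f s :=
      pinv_of_forall_ge hfi (fun s hs => hMf s (fun hmem => by simp at hmem; linarith)) hx
    have h2 : pinv g x = (1 / 2) * ∫ s, g s :=
      pinv_of_forall_ge hgi (fun s hs => hMg s (fun hmem => by simp at hmem; linarith)) hx
    simp [Pi.mul_apply, h1, h2]
  have hbot : Tendsto (pinv f * pinv g) atBot
      (nhds ((-((1 / 2) * ∫ s, f s)) * (-((1 / 2) * ∫ s, g s)))) := by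
    apply Tendsto.congr' _ tendsto_const_nhds
    filter_upwards [eventually_le_atBot (-(M+1))] with x hx
    have h1 : pinv f x = -((1 / 2) * ∫ s, f s) :=
      pinv_of_forall_le hfi (fun s hs => hMf s (fun hmem => by simp at hmem; linarith)) hx
    have h2 : pinv g x = -((1 / 2) * ∫ s, g s) :=
      pinv_of_forall_le hgi (fun s hs => hMg s (fun hmem => by simp at hmem; linarith)) hx
    simp [Pi.mul_apply, h1, h2]
  have hder : ∀ x, HasDerivAt (pinv f) (f x) x := hasDerivAt_pinv hf hfi
  have hder' : ∀ x, HasDerivAt (pinv g) (g x) x := hasDerivAt_pinv hg hgi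
  have hint1 : Integrable (f * pinv g) :=
    (hf.mul (pinv_continuous hg hgi)).integrable_of_hasCompactSupport
      (hfc.mul_right)
  have hint2 : Integrable (pinv f * g) :=
    ((pinv_continuous hf hfi).mul hg).integrable_of_hasCompactSupport
      (hgc.mul_left)
  have key := integral_mul_deriv_eq_deriv_mul (fun x _ => hder x) (fun x _ => hder' x) hint2 hint1 hbot htop
  -- key : ∫ x, pinv f x * g x = b' - a' - ∫ x, f x * pinv g x
  have : (((1 / 2) * ∫ s, f s) * ((1 / 2) * ∫ s, g s))
      - ((-((1 / 2) * ∫ s, f s)) * (-((1 / 2) * ∫ s, g s))) = 0 := by ring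
  rw [this, zero_sub] at key
  simpa using key

end pinv1d

section swap
variable {g : ℝ × ℝ → ℂ}

lemma pinvX_swap (p : ℝ × ℝ) : pinvX g p = pinvY (fun q => g q.swap) p.swap := rfl
lemma pinvY_swap (p : ℝ × ℝ) : pinvY g p = pinvX (fun q => g q.swap) p.swap := rfl
lemma dX_swap (p : ℝ × ℝ) : dX g p = dY (fun q => g q.swap) p.swap := rfl
lemma dY_swap (p : ℝ × ℝ) : dY g p = dX (fun q => g q.swap) p.swap := rfl

lemma integral_swap₂ (F : ℝ × ℝ → ℂ) : ∫ p : ℝ × ℝ, F p.swap = ∫ p : ℝ × ℝ, F p := by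
  rw [show ((volume : Measure (ℝ × ℝ))) = (volume : Measure ℝ).prod volume from
    MeasureTheory.Measure.volume_eq_prod ℝ ℝ]
  exact MeasureTheory.integral_prod_swap F

lemma contDiff_swapc (hg : ContDiff ℝ (⊤ : ℕ∞) g) : ContDiff ℝ (⊤ : ℕ∞) (fun q : ℝ × ℝ => g q.swap) :=
  hg.comp (contDiff_snd.prodMk contDiff_fst)

lemma hcs_swapc (hg : HasCompactSupport g) : HasCompactSupport (fun q : ℝ × ℝ => g q.swap) :=
  hg.comp_homeomorph (Homeomorph.prodComm ℝ ℝ)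

lemma continuous_swapc (hg : Continuous g) : Continuous (fun q : ℝ × ℝ => g q.swap) :=
  hg.comp continuous_swap

end swap

section bounds
variable {g : ℝ × ℝ → ℂ}

lemma exists_bound2 (hgc : HasCompactSupport g) :
    ∃ K : ℝ, 0 < K ∧ ∀ x s : ℝ, s ∉ Set.Icc (-K) K → g (x, s) = 0 := by
  obtain ⟨K, hK0, hK⟩ := (hgc.image continuous_snd).isBounded.subset_closedBall_lt 0 0
  refine ⟨K, hK0, fun x s hs => ?_⟩
  by_contra hne
  apply hs
  have : s ∈ Metric.closedBall (0:ℝ) K := hK ⟨(x, s), subset_tsupport g hne, rfl⟩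
  simpa [Real.closedBall_eq_Icc, zero_sub, zero_add] using this

end bounds

section pinvYcont
variable {g : ℝ × ℝ → ℂ}

lemma pinvY_integral_repr (hg : Continuous g) (hgc : HasCompactSupport g) (p : ℝ × ℝ) :
    pinvY g p = ∫ s : ℝ, (if s < p.2 then (1/2 : ℂ) else -(1/2)) * g (p.1, s) := by
  have hsecti : Integrable (fun s => g (p.1, s)) :=
    (hg.comp (continuous_const.prodMk continuous_id)).integrable_of_hasCompactSupport
      (by
        apply HasCompactSupport.intro (hgc.image continuous_snd)
        intro y hy
        by_contra hne
        exact hy ⟨(p.1, y), subset_tsupport g hne, rfl⟩)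
  have hmeas : StronglyMeasurable (fun s : ℝ => (if s < p.2 then (1/2 : ℂ) else -(1/2))) := by
    apply StronglyMeasurable.ite measurableSet_Iio <;> exact stronglyMeasurable_const
  have hki : Integrable (fun s : ℝ => (if s < p.2 then (1/2 : ℂ) else -(1/2)) * g (p.1, s)) := by
    apply Integrable.mono' (hsecti.norm.const_mul (1/2))
      ((hmeas.aestronglyMeasurable).mul (hg.comp
        (continuous_const.prodMk continuous_id)).aestronglyMeasurable)
    filter_upwards with s
    simp only [Pi.mul_apply, Function.comp_apply, norm_mul, id]
    have h2 : ‖(if s < p.2 then (1/2:ℂ) else -(1/2))‖ ≤ 1/2 := by split <;> norm_num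
    exact mul_le_mul_of_nonneg_right h2 (norm_nonneg _)
  have hsplit : (∫ s : ℝ, (if s < p.2 then (1/2 : ℂ) else -(1/2)) * g (p.1, s))
      = (∫ s in Set.Iio p.2, (if s < p.2 then (1/2 : ℂ) else -(1/2)) * g (p.1, s))
        + ∫ s in Set.Ici p.2, (if s < p.2 then (1/2 : ℂ) else -(1/2)) * g (p.1, s) :=
    (intervalIntegral.integral_Iio_add_Ici hki.integrableOn hki.integrableOn).symm
  rw [hsplit]
  have e1 : (∫ s in Set.Iio p.2, (if s < p.2 then (1/2 : ℂ) else -(1/2)) * g (p.1, s))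
      = (1/2 : ℂ) * ∫ s in Set.Iio p.2, g (p.1, s) := by
    rw [← MeasureTheory.integral_const_mul]
    apply setIntegral_congr_fun measurableSet_Iio
    intro s hs; simp [Set.mem_Iio.1 hs]
  have e2 : (∫ s in Set.Ici p.2, (if s < p.2 then (1/2 : ℂ) else -(1/2)) * g (p.1, s))
      = -(1/2 : ℂ) * ∫ s in Set.Ici p.2, g (p.1, s) := by
    rw [← MeasureTheory.integral_const_mul]
    apply setIntegral_congr_fun measurableSet_Ici
    intro s hs; simp [not_lt.2 (Set.mem_Ici.1 hs)]
  rw [e1, e2, integral_Ici_eq_integral_Ioi]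
  show pinv (fun s => g (p.1, s)) p.2 = _
  rw [pinv]; ring

lemma pinvY_continuous (hg : Continuous g) (hgc : HasCompactSupport g) :
    Continuous (pinvY g) := by
  obtain ⟨C, hC⟩ := hgc.exists_bound_of_continuous hg
  have hC0 : 0 ≤ C := le_trans (norm_nonneg _) (hC (0, 0))
  obtain ⟨K, hK0, hK⟩ := exists_bound2 hgc
  rw [continuous_iff_continuousAt]
  intro p
  have hrepr : ∀ q : ℝ × ℝ, pinvY g q
      = ∫ s : ℝ, (if s < q.2 then (1/2 : ℂ) else -(1/2)) * g (q.1, s) :=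
    fun q => pinvY_integral_repr hg hgc q
  rw [show (pinvY g) = fun q => ∫ s : ℝ,
      (if s < q.2 then (1/2 : ℂ) else -(1/2)) * g (q.1, s) from funext hrepr]
  apply MeasureTheory.continuousAt_of_dominated (bound := fun s =>
      Set.indicator (Set.Icc (-K) K) (fun _ => C) s)
  · filter_upwards with q
    have hmeas : StronglyMeasurable (fun s : ℝ => (if s < q.2 then (1/2 : ℂ) else -(1/2))) := by
      apply StronglyMeasurable.ite measurableSet_Iio <;> exact stronglyMeasurable_const
    exact (hmeas.aestronglyMeasurable).mul
      (hg.comp (continuous_const.prodMk continuous_id)).aestronglyMeasurable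
  · filter_upwards with q
    filter_upwards with s
    by_cases hs : s ∈ Set.Icc (-K) K
    · rw [Set.indicator_of_mem hs, norm_mul]
      have h2 : ‖(if s < q.2 then (1/2:ℂ) else -(1/2))‖ ≤ 1 := by split <;> norm_num
      calc ‖(if s < q.2 then (1/2:ℂ) else -(1/2))‖ * ‖g (q.1, s)‖
          ≤ 1 * ‖g (q.1, s)‖ := mul_le_mul_of_nonneg_right h2 (norm_nonneg _)
        _ = ‖g (q.1, s)‖ := one_mul _
        _ ≤ C := hC _
    · rw [Set.indicator_of_notMem hs, hK q.1 s hs]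
      simp
  · exact ((integrableOn_const measure_Icc_lt_top.ne enorm_ne_top).integrable_indicator
      measurableSet_Icc)
  · have hne : ∀ᵐ s : ℝ, s ≠ p.2 := by
      rw [ae_iff]
      simpa using measure_singleton p.2
    filter_upwards [hne] with s hs
    rcases lt_or_gt_of_ne hs with h | h
    · have hbase : ContinuousAt (fun q : ℝ × ℝ => (1/2 : ℂ) * g (q.1, s)) p :=
        (continuous_const.mul (hg.comp (continuous_fst.prodMk continuous_const))).continuousAt
      apply hbase.congr
      have : {q : ℝ × ℝ | s < q.2} ∈ nhds p :=
        (isOpen_lt continuous_const continuous_snd).mem_nhds h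
      filter_upwards [this] with q hq
      simp [hq]
    · have hbase : ContinuousAt (fun q : ℝ × ℝ => (-(1/2) : ℂ) * g (q.1, s)) p :=
        (continuous_const.mul (hg.comp (continuous_fst.prodMk continuous_const))).continuousAt
      apply hbase.congr
      have : {q : ℝ × ℝ | q.2 < s} ∈ nhds p :=
        (isOpen_lt continuous_snd continuous_const).mem_nhds h
      filter_upwards [this] with q hq
      simp [not_lt.2 (le_of_lt hq)]

end pinvYcont

section paramderiv
variable {g : ℝ × ℝ → ℂ}

lemma hasDerivAt_setIntegral_sect (hg : ContDiff ℝ (⊤ : ℕ∞) g) (hgc : HasCompactSupport g)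
    (A : Set ℝ) (x₀ : ℝ) :
    HasDerivAt (fun x => ∫ s in A, g (x, s)) (∫ s in A, dX g (x₀, s)) x₀ := by
  obtain ⟨C, hC⟩ := (hcs_dX hgc).exists_bound_of_continuous (contDiff_dX hg).continuous
  obtain ⟨K, hK0, hK⟩ := exists_bound2 (hcs_dX hgc)
  refine (hasDerivAt_integral_of_dominated_loc_of_deriv_le (s := Metric.ball x₀ 1)
    (F := fun x s => g (x, s)) (F' := fun x s => dX g (x, s)) (x₀ := x₀)
    (bound := fun s => Set.indicator (Set.Icc (-K) K) (fun _ => C) s)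
    (Metric.ball_mem_nhds x₀ one_pos) ?_ ?_ ?_ ?_ ?_ ?_).2
  · filter_upwards with x
    exact ((hg.continuous.comp (continuous_const.prodMk continuous_id)).aestronglyMeasurable).restrict
  · exact ((hg.continuous.comp
      (continuous_const.prodMk continuous_id)).integrable_of_hasCompactSupport
      (hcs_sectY hgc x₀)).restrict
  · exact (((contDiff_dX hg).continuous.comp
      (continuous_const.prodMk continuous_id)).aestronglyMeasurable).restrict
  · filter_upwards with s
    intro x hx
    by_cases hs : s ∈ Set.Icc (-K) K
    · rw [Set.indicator_of_mem hs]; exact hC _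
    · rw [Set.indicator_of_notMem hs, hK x s hs]; simp
  · exact ((integrableOn_const measure_Icc_lt_top.ne enorm_ne_top).integrable_indicator
      measurableSet_Icc).restrict
  · filter_upwards with s
    intro x hx
    exact hasDerivAt_dX hg (x, s)

lemma hasDerivAt_pinvY_fst (hg : ContDiff ℝ (⊤ : ℕ∞) g) (hgc : HasCompactSupport g) (p : ℝ × ℝ) :
    HasDerivAt (fun x => pinvY g (x, p.2)) (pinvY (dX g) p) p.1 := by
  have h1 := hasDerivAt_setIntegral_sect hg hgc (Set.Iio p.2) p.1
  have h2 := hasDerivAt_setIntegral_sect hg hgc (Set.Ioi p.2) p.1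
  have h3 := (h1.sub h2).const_mul ((1 : ℂ)/2)
  simpa [pinvY, pinv] using h3

lemma dX_pinvY (hg : ContDiff ℝ (⊤ : ℕ∞) g) (hgc : HasCompactSupport g) (p : ℝ × ℝ) :
    dX (pinvY g) p = pinvY (dX g) p :=
  (hasDerivAt_pinvY_fst hg hgc p).deriv

lemma dY_pinvX (hg : ContDiff ℝ (⊤ : ℕ∞) g) (hgc : HasCompactSupport g) (p : ℝ × ℝ) :
    dY (pinvX g) p = pinvX (dY g) p := by
  rw [dY_swap (g := pinvX g)]
  have e1 : (fun q : ℝ × ℝ => pinvX g q.swap) = pinvY (fun q => g q.swap) := by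
    funext q
    rw [pinvX_swap]
    simp
  rw [e1, dX_pinvY (contDiff_swapc hg) (hcs_swapc hgc)]
  have e2 : dX (fun q : ℝ × ℝ => g q.swap) = fun q => dY g q.swap := by
    funext q
    rw [dY_swap (g := g) (p := q.swap)]
    simp
  rw [e2, pinvX_swap (g := dY g)]

lemma hasDerivAt_pinvX_snd (hg : ContDiff ℝ (⊤ : ℕ∞) g) (hgc : HasCompactSupport g) (p : ℝ × ℝ) :
    HasDerivAt (fun y => pinvX g (p.1, y)) (pinvX (dY g) p) p.2 := by
  have h := hasDerivAt_pinvY_fst (contDiff_swapc hg) (hcs_swapc hgc) (p.2, p.1)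
  have e1 : (fun x => pinvY (fun q => g q.swap) (x, p.1)) = fun y => pinvX g (p.1, y) := by
    funext y
    rw [pinvX_swap]
    rfl
  have e2 : pinvY (dX fun q => g q.swap) (p.2, p.1) = pinvX (dY g) p := by
    have : dX (fun q : ℝ × ℝ => g q.swap) = fun q => dY g q.swap := by
      funext q
      rw [dY_swap (g := g) (p := q.swap)]
      simp
    rw [this, pinvX_swap (g := dY g)]
    rfl
  rw [e1, e2] at h
  exact h

lemma pinvX_continuous (hg : Continuous g) (hgc : HasCompactSupport g) :
    Continuous (pinvX g) := by
  have : pinvX g = fun p => pinvY (fun q => g q.swap) p.swap := funext fun p => pinvX_swap p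
  rw [this]
  exact (pinvY_continuous (continuous_swapc hg) (hcs_swapc hgc)).comp continuous_swap

lemma T_repr (hg : ContDiff ℝ (⊤ : ℕ∞) g) (hgc : HasCompactSupport g) (p : ℝ × ℝ) :
    T g p = pinvY (dX g) p + pinvX (dY g) p := by
  rw [T, dX_pinvY hg hgc, dY_pinvX hg hgc]

lemma T_continuous (hg : ContDiff ℝ (⊤ : ℕ∞) g) (hgc : HasCompactSupport g) :
    Continuous (T g) := by
  have : T g = fun p => pinvY (dX g) p + pinvX (dY g) p := funext fun p => T_repr hg hgc p
  rw [this]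
  exact (pinvY_continuous (contDiff_dX hg).continuous (hcs_dX hgc)).add
    (pinvX_continuous (contDiff_dY hg).continuous (hcs_dY hgc))

end paramderiv

section fubini

lemma integral_eq_iterated (F : ℝ × ℝ → ℂ) (hF : Continuous F) (hFc : HasCompactSupport F) :
    ∫ p : ℝ × ℝ, F p = ∫ x : ℝ, ∫ y : ℝ, F (x, y) := by
  have hFi : Integrable F ((volume : Measure ℝ).prod volume) := by
    rw [← MeasureTheory.Measure.volume_eq_prod]
    exact hF.integrable_of_hasCompactSupport hFc
  rw [show ((volume : Measure (ℝ × ℝ))) = (volume : Measure ℝ).prod volume from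
    MeasureTheory.Measure.volume_eq_prod ℝ ℝ]
  exact MeasureTheory.integral_prod F hFi

lemma integral_eq_iterated_symm (F : ℝ × ℝ → ℂ) (hF : Continuous F)
    (hFc : HasCompactSupport F) :
    ∫ p : ℝ × ℝ, F p = ∫ y : ℝ, ∫ x : ℝ, F (x, y) := by
  have hFi : Integrable F ((volume : Measure ℝ).prod volume) := by
    rw [← MeasureTheory.Measure.volume_eq_prod]
    exact hF.integrable_of_hasCompactSupport hFc
  rw [show ((volume : Measure (ℝ × ℝ))) = (volume : Measure ℝ).prod volume from
    MeasureTheory.Measure.volume_eq_prod ℝ ℝ]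
  exact MeasureTheory.integral_prod_symm F hFi

end fubini

section ibp

lemma ibp1d (u v u' v' : ℝ → ℂ) (hu : ∀ x, HasDerivAt u (u' x) x)
    (hv : ∀ x, HasDerivAt v (v' x) x)
    (hiuv' : Integrable (fun x => u x * v' x)) (hiu'v : Integrable (fun x => u' x * v x))
    (hvc : HasCompactSupport v) :
    ∫ x, u' x * v x = - ∫ x, u x * v' x := by
  obtain ⟨R, hR0, hR⟩ := tsupport_subset_Icc hvc
  have htop : Tendsto (u * v) atTop (nhds 0) := by
    apply Tendsto.congr' _ tendsto_const_nhds
    filter_upwards [eventually_ge_atTop (R + 1)] with x hx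
    have : v x = 0 := hR x (by intro hm; simp only [Set.mem_Icc] at hm; linarith)
    simp [Pi.mul_apply, this]
  have hbot : Tendsto (u * v) atBot (nhds 0) := by
    apply Tendsto.congr' _ tendsto_const_nhds
    filter_upwards [eventually_le_atBot (-(R + 1))] with x hx
    have : v x = 0 := hR x (by intro hm; simp only [Set.mem_Icc] at hm; linarith)
    simp [Pi.mul_apply, this]
  have key := integral_mul_deriv_eq_deriv_mul (fun x _ => hu x) (fun x _ => hv x) hiuv' hiu'v hbot htop
  linear_combination key

lemma ibp2d_x (F F' G G' : ℝ × ℝ → ℂ)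
    (hF : Continuous F) (hF' : Continuous F') (hG : Continuous G) (hG' : Continuous G')
    (hGc : HasCompactSupport G) (hG'c : HasCompactSupport G')
    (hdF : ∀ p : ℝ × ℝ, HasDerivAt (fun x => F (x, p.2)) (F' p) p.1)
    (hdG : ∀ p : ℝ × ℝ, HasDerivAt (fun x => G (x, p.2)) (G' p) p.1) :
    ∫ p : ℝ × ℝ, F' p * G p = - ∫ p : ℝ × ℝ, F p * G' p := by
  rw [integral_eq_iterated_symm (fun p => F' p * G p) (hF'.mul hG) (hGc.mul_left),
      integral_eq_iterated_symm (fun p => F p * G' p) (hF.mul hG') (hG'c.mul_left), ← integral_neg]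
  apply integral_congr_ae
  filter_upwards with y
  have := ibp1d (fun x => F (x, y)) (fun x => G (x, y))
      (fun x => F' (x, y)) (fun x => G' (x, y))
      (fun x => hdF (x, y)) (fun x => hdG (x, y))
      (((hF.comp (continuous_id.prodMk continuous_const)).mul
        (hG'.comp (continuous_id.prodMk continuous_const))).integrable_of_hasCompactSupport
        ((hcs_sectX hG'c y).mul_left))
      (((hF'.comp (continuous_id.prodMk continuous_const)).mul
        (hG.comp (continuous_id.prodMk continuous_const))).integrable_of_hasCompactSupport
        ((hcs_sectX hGc y).mul_left))
      (hcs_sectX hGc y)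
  exact this

lemma ibp2d_y (F F' G G' : ℝ × ℝ → ℂ)
    (hF : Continuous F) (hF' : Continuous F') (hG : Continuous G) (hG' : Continuous G')
    (hGc : HasCompactSupport G) (hG'c : HasCompactSupport G')
    (hdF : ∀ p : ℝ × ℝ, HasDerivAt (fun y => F (p.1, y)) (F' p) p.2)
    (hdG : ∀ p : ℝ × ℝ, HasDerivAt (fun y => G (p.1, y)) (G' p) p.2) :
    ∫ p : ℝ × ℝ, F' p * G p = - ∫ p : ℝ × ℝ, F p * G' p := by
  have h1 : ∫ p : ℝ × ℝ, F' p * G p = ∫ p : ℝ × ℝ, F' p.swap * G p.swap :=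
    (integral_swap₂ (fun p => F' p * G p)).symm
  have h2 : ∫ p : ℝ × ℝ, F p * G' p = ∫ p : ℝ × ℝ, F p.swap * G' p.swap :=
    (integral_swap₂ (fun p => F p * G' p)).symm
  rw [h1, h2]
  exact ibp2d_x (fun p => F p.swap) (fun p => F' p.swap) (fun p => G p.swap)
    (fun p => G' p.swap)
    (continuous_swapc hF) (continuous_swapc hF') (continuous_swapc hG) (continuous_swapc hG')
    (hcs_swapc hGc) (hcs_swapc hG'c)
    (fun p => hdF p.swap) (fun p => hdG p.swap)

end ibp

section adj

lemma adj_pinvY (φ ψ : ℝ × ℝ → ℂ) (hφ : Continuous φ) (hφc : HasCompactSupport φ)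
    (hψ : Continuous ψ) (hψc : HasCompactSupport ψ) :
    ∫ p : ℝ × ℝ, pinvY φ p * ψ p = - ∫ p : ℝ × ℝ, φ p * pinvY ψ p := by
  rw [integral_eq_iterated (fun p => pinvY φ p * ψ p) ((pinvY_continuous hφ hφc).mul hψ) (hψc.mul_left),
      integral_eq_iterated (fun p => φ p * pinvY ψ p) (hφ.mul (pinvY_continuous hψ hψc)) (hφc.mul_right),
      ← integral_neg]
  apply integral_congr_ae
  filter_upwards with x
  have hf : Continuous (fun s => φ (x, s)) := hφ.comp (continuous_const.prodMk continuous_id)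
  have hg : Continuous (fun s => ψ (x, s)) := hψ.comp (continuous_const.prodMk continuous_id)
  exact integral_pinv_mul hf (hcs_sectY hφc x) hg (hcs_sectY hψc x)

lemma adj_pinvX (φ ψ : ℝ × ℝ → ℂ) (hφ : Continuous φ) (hφc : HasCompactSupport φ)
    (hψ : Continuous ψ) (hψc : HasCompactSupport ψ) :
    ∫ p : ℝ × ℝ, pinvX φ p * ψ p = - ∫ p : ℝ × ℝ, φ p * pinvX ψ p := by
  have h1 : ∫ p : ℝ × ℝ, pinvX φ p * ψ p
      = ∫ p : ℝ × ℝ, pinvY (fun q => φ q.swap) p * ψ p.swap := by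
    rw [← integral_swap₂ (fun p => pinvX φ p * ψ p)]
    apply integral_congr_ae
    filter_upwards with p
    rw [pinvX_swap]
    simp
  have h2 : ∫ p : ℝ × ℝ, φ p * pinvX ψ p
      = ∫ p : ℝ × ℝ, φ p.swap * pinvY (fun q => ψ q.swap) p := by
    rw [← integral_swap₂ (fun p => φ p * pinvX ψ p)]
    apply integral_congr_ae
    filter_upwards with p
    rw [pinvX_swap]
    simp
  rw [h1, h2]
  exact adj_pinvY (fun q => φ q.swap) (fun q => ψ q.swap)
    (continuous_swapc hφ) (hcs_swapc hφc) (continuous_swapc hψ) (hcs_swapc hψc)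

end adj

section linearity
variable {g g₁ g₂ : ℝ × ℝ → ℂ}

lemma pinv_add_mul (f₁ f₂ : ℝ → ℂ) (h₁ : Integrable f₁) (h₂ : Integrable f₂) (c : ℂ) (x : ℝ) :
    pinv (fun s => f₁ s + c * f₂ s) x = pinv f₁ x + c * pinv f₂ x := by
  unfold pinv
  rw [integral_add h₁.integrableOn ((h₂.const_mul c).integrableOn),
      integral_add h₁.integrableOn ((h₂.const_mul c).integrableOn),
      MeasureTheory.integral_const_mul, MeasureTheory.integral_const_mul]
  ring

lemma integrable_sectY (hg : Continuous g) (hgc : HasCompactSupport g) (x : ℝ) :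
    Integrable (fun s => g (x, s)) :=
  (hg.comp (continuous_const.prodMk continuous_id)).integrable_of_hasCompactSupport
    (hcs_sectY hgc x)

lemma integrable_sectX (hg : Continuous g) (hgc : HasCompactSupport g) (y : ℝ) :
    Integrable (fun s => g (s, y)) :=
  (hg.comp (continuous_id.prodMk continuous_const)).integrable_of_hasCompactSupport
    (hcs_sectX hgc y)

lemma dX_add_mul (hg₁ : ContDiff ℝ (⊤ : ℕ∞) g₁) (hg₂ : ContDiff ℝ (⊤ : ℕ∞) g₂) (c : ℂ) (p : ℝ × ℝ) :
    dX (fun q => g₁ q + c * g₂ q) p = dX g₁ p + c * dX g₂ p := by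
  have := ((hasDerivAt_dX hg₁ p).add ((hasDerivAt_dX hg₂ p).const_mul c)).deriv
  rw [dX]
  exact this

lemma dY_add_mul (hg₁ : ContDiff ℝ (⊤ : ℕ∞) g₁) (hg₂ : ContDiff ℝ (⊤ : ℕ∞) g₂) (c : ℂ) (p : ℝ × ℝ) :
    dY (fun q => g₁ q + c * g₂ q) p = dY g₁ p + c * dY g₂ p := by
  have := ((hasDerivAt_dY hg₁ p).add ((hasDerivAt_dY hg₂ p).const_mul c)).deriv
  rw [dY]
  exact this

lemma pinvY_add_mul (hg₁ : Continuous g₁) (hg₁c : HasCompactSupport g₁)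
    (hg₂ : Continuous g₂) (hg₂c : HasCompactSupport g₂) (c : ℂ) :
    pinvY (fun q => g₁ q + c * g₂ q) = fun q => pinvY g₁ q + c * pinvY g₂ q := by
  funext q
  exact pinv_add_mul _ _ (integrable_sectY hg₁ hg₁c q.1) (integrable_sectY hg₂ hg₂c q.1) c q.2

lemma pinvX_add_mul (hg₁ : Continuous g₁) (hg₁c : HasCompactSupport g₁)
    (hg₂ : Continuous g₂) (hg₂c : HasCompactSupport g₂) (c : ℂ) :
    pinvX (fun q => g₁ q + c * g₂ q) = fun q => pinvX g₁ q + c * pinvX g₂ q := by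
  funext q
  exact pinv_add_mul _ _ (integrable_sectX hg₁ hg₁c q.2) (integrable_sectX hg₂ hg₂c q.2) c q.1

lemma T_add_mul (hg₁ : ContDiff ℝ (⊤ : ℕ∞) g₁) (hg₁c : HasCompactSupport g₁)
    (hg₂ : ContDiff ℝ (⊤ : ℕ∞) g₂) (hg₂c : HasCompactSupport g₂) (c : ℂ) (p : ℝ × ℝ) :
    T (fun q => g₁ q + c * g₂ q) p = T g₁ p + c * T g₂ p := by
  rw [T, T, T, pinvY_add_mul hg₁.continuous hg₁c hg₂.continuous hg₂c c,
      pinvX_add_mul hg₁.continuous hg₁c hg₂.continuous hg₂c c]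
  have d1 : dX (fun q => pinvY g₁ q + c * pinvY g₂ q) p
      = dX (pinvY g₁) p + c * dX (pinvY g₂) p := by
    have h1 := hasDerivAt_pinvY_fst hg₁ hg₁c p
    have h2 := (hasDerivAt_pinvY_fst hg₂ hg₂c p).const_mul c
    have h3 := by simpa only [Pi.add_def] using (h1.add h2).deriv
    rw [dX]
    rw [h3, dX_pinvY hg₁ hg₁c, dX_pinvY hg₂ hg₂c]
  have d2 : dY (fun q => pinvX g₁ q + c * pinvX g₂ q) p
      = dY (pinvX g₁) p + c * dY (pinvX g₂) p := by
    have h1 := hasDerivAt_pinvX_snd hg₁ hg₁c p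
    have h2 := (hasDerivAt_pinvX_snd hg₂ hg₂c p).const_mul c
    have h3 := by simpa only [Pi.add_def] using (h1.add h2).deriv
    rw [dY]
    rw [h3, dY_pinvX hg₁ hg₁c, dY_pinvX hg₂ hg₂c]
  rw [d1, d2]
  ring

end linearity

section splitters

lemma integral_split5 (t1 t2 t3 t4 t5 : ℝ × ℝ → ℂ) (h1 : Integrable t1) (h2 : Integrable t2)
    (h3 : Integrable t3) (h4 : Integrable t4) (h5 : Integrable t5) :
    ∫ p : ℝ × ℝ, (t1 p + t2 p - t3 p - t4 p - t5 p)
      = (∫ p : ℝ × ℝ, t1 p) + (∫ p : ℝ × ℝ, t2 p) - (∫ p : ℝ × ℝ, t3 p)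
        - (∫ p : ℝ × ℝ, t4 p) - ∫ p : ℝ × ℝ, t5 p := by
  have g2 : Integrable (fun p => t1 p + t2 p) := h1.add h2
  have g3 : Integrable (fun p => t1 p + t2 p - t3 p) := g2.sub h3
  have g4 : Integrable (fun p => t1 p + t2 p - t3 p - t4 p) := g3.sub h4
  rw [MeasureTheory.integral_sub g4 h5, MeasureTheory.integral_sub g3 h4,
      MeasureTheory.integral_sub g2 h3, MeasureTheory.integral_add h1 h2]

lemma integral_split5N (t1 t2 t3 t4 t5 : ℝ × ℝ → ℂ) (h1 : Integrable t1) (h2 : Integrable t2)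
    (h3 : Integrable t3) (h4 : Integrable t4) (h5 : Integrable t5) :
    ∫ p : ℝ × ℝ, (-(t1 p) - t2 p - t3 p - t4 p - t5 p)
      = -(∫ p : ℝ × ℝ, t1 p) - (∫ p : ℝ × ℝ, t2 p) - (∫ p : ℝ × ℝ, t3 p)
        - (∫ p : ℝ × ℝ, t4 p) - ∫ p : ℝ × ℝ, t5 p := by
  have g1 : Integrable (fun p => -(t1 p)) := h1.neg
  have g2 : Integrable (fun p => -(t1 p) - t2 p) := g1.sub h2
  have g3 : Integrable (fun p => -(t1 p) - t2 p - t3 p) := g2.sub h3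
  have g4 : Integrable (fun p => -(t1 p) - t2 p - t3 p - t4 p) := g3.sub h4
  rw [MeasureTheory.integral_sub g4 h5, MeasureTheory.integral_sub g3 h4,
      MeasureTheory.integral_sub g2 h3, MeasureTheory.integral_sub g1 h2,
      MeasureTheory.integral_neg]

lemma integral_quad (A B C : ℝ × ℝ → ℂ) (hA : Integrable A) (hB : Integrable B)
    (hC : Integrable C) (a b : ℂ) :
    ∫ p : ℝ × ℝ, (A p + a * B p + b * C p)
      = (∫ p : ℝ × ℝ, A p) + a * (∫ p : ℝ × ℝ, B p) + b * ∫ p : ℝ × ℝ, C p := by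
  have gB : Integrable (fun p => a * B p) := hB.const_mul a
  have gC : Integrable (fun p => b * C p) := hC.const_mul b
  have gAB : Integrable (fun p => A p + a * B p) := hA.add gB
  rw [MeasureTheory.integral_add gAB gC, MeasureTheory.integral_add hA gB,
      MeasureTheory.integral_const_mul, MeasureTheory.integral_const_mul]

end splitters

/-- Theorem 1 (weak Hamiltonian form of the (2+1) nonlinear Schrödinger equation):
if `u` solves `i u_t + Δu + (v₁ + v₂)u = 0` with the pseudopotentials (1.5), then
`∂u₁/∂t = −i δH/δu₂` in the weak (variational) sense. -/
theorem NLS_Hamiltonian_form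
    (u : ℝ → ℝ × ℝ → ℂ)
    (hu : ContDiff ℝ (⊤ : ℕ∞) (fun q : ℝ × (ℝ × ℝ) => u q.1 q.2))
    (huc : ∀ t : ℝ, HasCompactSupport (u t))
    (r s : ℝ → ℝ) (hr : Continuous r) (hs : Continuous s)
    (v₁ v₂ : ℝ → ℝ × ℝ → ℂ)
    (hv₁ : ∀ t (p : ℝ × ℝ), v₁ t p = (r p.2 : ℂ) +
      2 * dY (pinvX (fun q => u t q * (starRingEnd ℂ) (u t q))) p)
    (hv₂ : ∀ t (p : ℝ × ℝ), v₂ t p = (s p.1 : ℂ) +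
      2 * dX (pinvY (fun q => u t q * (starRingEnd ℂ) (u t q))) p)
    (heq : ∀ t (p : ℝ × ℝ),
      Complex.I * deriv (fun τ => u τ p) t
        + (dX (dX (u t)) p + dY (dY (u t)) p)
        + (v₁ t p + v₂ t p) * u t p = 0) :
    ∀ t : ℝ, ∀ h : ℝ × ℝ → ℂ, ContDiff ℝ (⊤ : ℕ∞) h → HasCompactSupport h →
      HasDerivAt
        (fun ε : ℝ =>
          Ham r s (u t) (fun p => (starRingEnd ℂ) (u t p) + (ε : ℂ) * h p))
        (Complex.I * ∫ p : ℝ × ℝ, deriv (fun τ => u τ p) t * h p) 0 := by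
  intro t h hh hhc
  -- regularity of the players
  have hU : ContDiff ℝ (⊤ : ℕ∞) (u t) := hu.comp (contDiff_const.prodMk contDiff_id)
  have hUcs : HasCompactSupport (u t) := huc t
  have hconj : ContDiff ℝ (⊤ : ℕ∞) (fun p : ℝ × ℝ => (starRingEnd ℂ) (u t p)) :=
    Complex.conjCLE.contDiff.comp hU
  have hconjcs : HasCompactSupport (fun p : ℝ × ℝ => (starRingEnd ℂ) (u t p)) :=
    hUcs.comp_left (by simp)
  set w : ℝ × ℝ → ℂ := fun q => u t q * (starRingEnd ℂ) (u t q) with hwdef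
  have hw : ContDiff ℝ (⊤ : ℕ∞) w := hU.mul hconj
  have hwcs : HasCompactSupport w := hUcs.mul_right
  set Uh : ℝ × ℝ → ℂ := fun q => u t q * h q with hUhdef
  have hUh : ContDiff ℝ (⊤ : ℕ∞) Uh := hU.mul hh
  have hUhcs : HasCompactSupport Uh := hUcs.mul_right
  -- time derivative
  have hut : ∀ p : ℝ × ℝ, HasDerivAt (fun τ => u τ p)
      (fderiv ℝ (fun q : ℝ × (ℝ × ℝ) => u q.1 q.2) (t, p) (1, ((0 : ℝ), (0 : ℝ)))) t := by
    intro p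
    have h1 : HasDerivAt (fun τ : ℝ => (τ, p)) ((1 : ℝ), ((0 : ℝ), (0 : ℝ))) t :=
      (hasDerivAt_id t).prodMk (hasDerivAt_const _ _)
    have h2 := ((hu.differentiable (by simp)) (t, p)).hasFDerivAt.comp_hasDerivAt t h1
    simpa [Function.comp_def] using h2
  have hutc : Continuous (fun p : ℝ × ℝ => deriv (fun τ => u τ p) t) := by
    have hfe : (fun p : ℝ × ℝ => deriv (fun τ => u τ p) t)
        = fun p => fderiv ℝ (fun q : ℝ × (ℝ × ℝ) => u q.1 q.2) (t, p) (1, ((0:ℝ), (0:ℝ))) :=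
      funext fun p => (hut p).deriv
    rw [hfe]
    exact (((hu.continuous_fderiv (by simp)).comp
      (continuous_const.prodMk continuous_id)).clm_apply continuous_const)
  -- continuity packages
  have hrsC : Continuous (fun p : ℝ × ℝ => ((r p.2 : ℂ) + (s p.1 : ℂ))) :=
    (Complex.continuous_ofReal.comp (hr.comp continuous_snd)).add
      (Complex.continuous_ofReal.comp (hs.comp continuous_fst))
  have hTw : Continuous (T w) := T_continuous hw hwcs
  have hTUh : Continuous (T Uh) := T_continuous hUh hUhcs
  -- the three coefficient functions
  set FA : ℝ × ℝ → ℂ := fun p => dX (u t) p * dX (fun q => (starRingEnd ℂ) (u t q)) p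
      + dY (u t) p * dY (fun q => (starRingEnd ℂ) (u t q)) p
      - u t p * ((r p.2 : ℂ) + (s p.1 : ℂ)) * (starRingEnd ℂ) (u t p)
      - w p * T w p
    with hFAdef
  set FB : ℝ × ℝ → ℂ := fun p => dX (u t) p * dX h p + dY (u t) p * dY h p
      - u t p * ((r p.2 : ℂ) + (s p.1 : ℂ)) * h p
      - Uh p * T w p - w p * T Uh p
    with hFBdef
  set FC : ℝ × ℝ → ℂ := fun p => -(Uh p * T Uh p) with hFCdef
  -- integrability of everything in sight
  have i1 : Integrable (fun p : ℝ × ℝ => dX (u t) p * dX h p) :=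
    ((contDiff_dX hU).continuous.mul (contDiff_dX hh).continuous).integrable_of_hasCompactSupport
      ((hcs_dX hhc).mul_left)
  have i2 : Integrable (fun p : ℝ × ℝ => dY (u t) p * dY h p) :=
    ((contDiff_dY hU).continuous.mul (contDiff_dY hh).continuous).integrable_of_hasCompactSupport
      ((hcs_dY hhc).mul_left)
  have i3 : Integrable (fun p : ℝ × ℝ => u t p * ((r p.2 : ℂ) + (s p.1 : ℂ)) * h p) :=
    ((hU.continuous.mul hrsC).mul hh.continuous).integrable_of_hasCompactSupport
      (hhc.mul_left)
  have i4 : Integrable (fun p : ℝ × ℝ => Uh p * T w p) :=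
    (hUh.continuous.mul hTw).integrable_of_hasCompactSupport (hUhcs.mul_right)
  have i5 : Integrable (fun p : ℝ × ℝ => w p * T Uh p) :=
    (hw.continuous.mul hTUh).integrable_of_hasCompactSupport (hwcs.mul_right)
  have i6 : Integrable (fun p : ℝ × ℝ => dX (dX (u t)) p * h p) :=
    ((contDiff_dX (contDiff_dX hU)).continuous.mul
      hh.continuous).integrable_of_hasCompactSupport (hhc.mul_left)
  have i7 : Integrable (fun p : ℝ × ℝ => dY (dY (u t)) p * h p) :=
    ((contDiff_dY (contDiff_dY hU)).continuous.mul
      hh.continuous).integrable_of_hasCompactSupport (hhc.mul_left)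
  have i5' : Integrable (fun p : ℝ × ℝ => T w p * Uh p) :=
    (hTw.mul hUh.continuous).integrable_of_hasCompactSupport (hUhcs.mul_left)
  have ia1 : Integrable (fun p : ℝ × ℝ => dX (u t) p * dX (fun q => (starRingEnd ℂ) (u t q)) p) :=
    ((contDiff_dX hU).continuous.mul
      (contDiff_dX hconj).continuous).integrable_of_hasCompactSupport
      ((hcs_dX hconjcs).mul_left)
  have ia2 : Integrable (fun p : ℝ × ℝ => dY (u t) p * dY (fun q => (starRingEnd ℂ) (u t q)) p) :=
    ((contDiff_dY hU).continuous.mul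
      (contDiff_dY hconj).continuous).integrable_of_hasCompactSupport
      ((hcs_dY hconjcs).mul_left)
  have ia3 : Integrable (fun p : ℝ × ℝ => u t p * ((r p.2 : ℂ) + (s p.1 : ℂ))
      * (starRingEnd ℂ) (u t p)) :=
    ((hU.continuous.mul hrsC).mul hconj.continuous).integrable_of_hasCompactSupport
      (hconjcs.mul_left)
  have ia4 : Integrable (fun p : ℝ × ℝ => w p * T w p) :=
    (hw.continuous.mul hTw).integrable_of_hasCompactSupport (hwcs.mul_right)
  have iA : Integrable FA := by
    rw [hFAdef]
    exact ((ia1.add ia2).sub ia3).sub ia4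
  have iB : Integrable FB := by
    rw [hFBdef]
    exact (((i1.add i2).sub i3).sub i4).sub i5
  have iC : Integrable FC := by
    rw [hFCdef]
    exact ((hUh.continuous.mul hTUh).integrable_of_hasCompactSupport (hUhcs.mul_right)).neg
  -- quadratic expansion of the Hamiltonian
  have hHam : ∀ ε : ℝ, Ham r s (u t) (fun p => (starRingEnd ℂ) (u t p) + (ε : ℂ) * h p)
      = (∫ p : ℝ × ℝ, FA p) + (ε : ℂ) * (∫ p : ℝ × ℝ, FB p)
        + (ε : ℂ) ^ 2 * (∫ p : ℝ × ℝ, FC p) := by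
    intro ε
    rw [Ham]
    have hlam : (fun q : ℝ × ℝ => u t q * ((starRingEnd ℂ) (u t q) + (ε : ℂ) * h q))
        = fun q => w q + (ε : ℂ) * Uh q := by
      funext q
      simp only [hwdef, hUhdef]
      ring
    have hpt : ∀ p : ℝ × ℝ,
        dX (u t) p * dX (fun p => (starRingEnd ℂ) (u t p) + (ε : ℂ) * h p) p
          + dY (u t) p * dY (fun p => (starRingEnd ℂ) (u t p) + (ε : ℂ) * h p) p
          - u t p * ((r p.2 : ℂ) + (s p.1 : ℂ))
              * ((starRingEnd ℂ) (u t p) + (ε : ℂ) * h p)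
          - u t p * ((starRingEnd ℂ) (u t p) + (ε : ℂ) * h p)
              * T (fun q => u t q * ((starRingEnd ℂ) (u t q) + (ε : ℂ) * h q)) p
        = FA p + (ε : ℂ) * FB p + (ε : ℂ) ^ 2 * FC p := by
      intro p
      rw [dX_add_mul hconj hh (ε : ℂ) p, dY_add_mul hconj hh (ε : ℂ) p, hlam,
        T_add_mul hw hwcs hUh hUhcs (ε : ℂ) p]
      simp only [hFAdef, hFBdef, hFCdef, hwdef, hUhdef]
      ring
    rw [integral_congr_ae (Filter.Eventually.of_forall hpt)]
    exact integral_quad FA FB FC iA iB iC _ _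
  -- Step A : integration by parts in x
  have hA : ∫ p : ℝ × ℝ, dX (u t) p * dX h p = - ∫ p : ℝ × ℝ, dX (dX (u t)) p * h p := by
    have hibp := ibp2d_x (dX (u t)) (dX (dX (u t))) h (dX h)
      (contDiff_dX hU).continuous (contDiff_dX (contDiff_dX hU)).continuous
      hh.continuous (contDiff_dX hh).continuous hhc (hcs_dX hhc)
      (fun p => hasDerivAt_dX (contDiff_dX hU) p) (fun p => hasDerivAt_dX hh p)
    linear_combination hibp
  have hB : ∫ p : ℝ × ℝ, dY (u t) p * dY h p = - ∫ p : ℝ × ℝ, dY (dY (u t)) p * h p := by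
    have hibp := ibp2d_y (dY (u t)) (dY (dY (u t))) h (dY h)
      (contDiff_dY hU).continuous (contDiff_dY (contDiff_dY hU)).continuous
      hh.continuous (contDiff_dY hh).continuous hhc (hcs_dY hhc)
      (fun p => hasDerivAt_dY (contDiff_dY hU) p) (fun p => hasDerivAt_dY hh p)
    linear_combination hibp
  -- Step C : self-adjointness of T
  have hC : ∫ p : ℝ × ℝ, w p * T Uh p = ∫ p : ℝ × ℝ, T w p * Uh p := by
    have int1 : Integrable (fun p : ℝ × ℝ => w p * pinvY (dX Uh) p) :=
      (hw.continuous.mul (pinvY_continuous (contDiff_dX hUh).continuous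
        (hcs_dX hUhcs))).integrable_of_hasCompactSupport (hwcs.mul_right)
    have int2 : Integrable (fun p : ℝ × ℝ => w p * pinvX (dY Uh) p) :=
      (hw.continuous.mul (pinvX_continuous (contDiff_dY hUh).continuous
        (hcs_dY hUhcs))).integrable_of_hasCompactSupport (hwcs.mul_right)
    have int3 : Integrable (fun p : ℝ × ℝ => pinvY (dX w) p * Uh p) :=
      ((pinvY_continuous (contDiff_dX hw).continuous (hcs_dX hwcs)).mul
        hUh.continuous).integrable_of_hasCompactSupport (hUhcs.mul_left)
    have int4 : Integrable (fun p : ℝ × ℝ => pinvX (dY w) p * Uh p) :=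
      ((pinvX_continuous (contDiff_dY hw).continuous (hcs_dY hwcs)).mul
        hUh.continuous).integrable_of_hasCompactSupport (hUhcs.mul_left)
    have split1 : ∫ p : ℝ × ℝ, w p * T Uh p
        = (∫ p : ℝ × ℝ, w p * pinvY (dX Uh) p) + ∫ p : ℝ × ℝ, w p * pinvX (dY Uh) p := by
      rw [← MeasureTheory.integral_add int1 int2]
      apply integral_congr_ae
      filter_upwards with p
      rw [T_repr hUh hUhcs p]
      ring
    have split2 : ∫ p : ℝ × ℝ, T w p * Uh p
        = (∫ p : ℝ × ℝ, pinvY (dX w) p * Uh p) + ∫ p : ℝ × ℝ, pinvX (dY w) p * Uh p := by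
      rw [← MeasureTheory.integral_add int3 int4]
      apply integral_congr_ae
      filter_upwards with p
      rw [T_repr hw hwcs p]
      ring
    have piece1 : ∫ p : ℝ × ℝ, w p * pinvY (dX Uh) p = ∫ p : ℝ × ℝ, pinvY (dX w) p * Uh p := by
      have s1 := adj_pinvY (dX Uh) w (contDiff_dX hUh).continuous (hcs_dX hUhcs)
        hw.continuous hwcs
      have comm1 : ∫ p : ℝ × ℝ, w p * pinvY (dX Uh) p
          = ∫ p : ℝ × ℝ, pinvY (dX Uh) p * w p :=
        integral_congr_ae (Filter.Eventually.of_forall fun p => mul_comm _ _)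
      have s2 := ibp2d_x (pinvY w) (pinvY (dX w)) Uh (dX Uh)
        (pinvY_continuous hw.continuous hwcs)
        (pinvY_continuous (contDiff_dX hw).continuous (hcs_dX hwcs))
        hUh.continuous (contDiff_dX hUh).continuous hUhcs (hcs_dX hUhcs)
        (fun p => hasDerivAt_pinvY_fst hw hwcs p) (fun p => hasDerivAt_dX hUh p)
      have comm2 : ∫ p : ℝ × ℝ, dX Uh p * pinvY w p
          = ∫ p : ℝ × ℝ, pinvY w p * dX Uh p :=
        integral_congr_ae (Filter.Eventually.of_forall fun p => mul_comm _ _)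
      linear_combination comm1 + s1 - comm2 - s2
    have piece2 : ∫ p : ℝ × ℝ, w p * pinvX (dY Uh) p = ∫ p : ℝ × ℝ, pinvX (dY w) p * Uh p := by
      have s1 := adj_pinvX (dY Uh) w (contDiff_dY hUh).continuous (hcs_dY hUhcs)
        hw.continuous hwcs
      have comm1 : ∫ p : ℝ × ℝ, w p * pinvX (dY Uh) p
          = ∫ p : ℝ × ℝ, pinvX (dY Uh) p * w p :=
        integral_congr_ae (Filter.Eventually.of_forall fun p => mul_comm _ _)
      have s2 := ibp2d_y (pinvX w) (pinvX (dY w)) Uh (dY Uh)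
        (pinvX_continuous hw.continuous hwcs)
        (pinvX_continuous (contDiff_dY hw).continuous (hcs_dY hwcs))
        hUh.continuous (contDiff_dY hUh).continuous hUhcs (hcs_dY hUhcs)
        (fun p => hasDerivAt_pinvX_snd hw hwcs p) (fun p => hasDerivAt_dY hUh p)
      have comm2 : ∫ p : ℝ × ℝ, dY Uh p * pinvX w p
          = ∫ p : ℝ × ℝ, pinvX w p * dY Uh p :=
        integral_congr_ae (Filter.Eventually.of_forall fun p => mul_comm _ _)
      linear_combination comm1 + s1 - comm2 - s2
    rw [split1, split2, piece1, piece2]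
  -- split of ∫ FB
  have hFBsplit : ∫ p : ℝ × ℝ, FB p
      = (∫ p : ℝ × ℝ, dX (u t) p * dX h p) + (∫ p : ℝ × ℝ, dY (u t) p * dY h p)
        - (∫ p : ℝ × ℝ, u t p * ((r p.2 : ℂ) + (s p.1 : ℂ)) * h p)
        - (∫ p : ℝ × ℝ, Uh p * T w p) - ∫ p : ℝ × ℝ, w p * T Uh p := by
    simp only [hFBdef]
    exact integral_split5 _ _ _ _ _ i1 i2 i3 i4 i5
  -- pointwise use of the PDE
  have hpt2 : ∀ p : ℝ × ℝ,
      -(dX (dX (u t)) p * h p) - dY (dY (u t)) p * h p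
        - u t p * ((r p.2 : ℂ) + (s p.1 : ℂ)) * h p
        - Uh p * T w p - T w p * Uh p
      = Complex.I * (deriv (fun τ => u τ p) t * h p) := by
    intro p
    have h1 := heq t p
    have h2 := hv₁ t p
    have h3 := hv₂ t p
    rw [← hwdef] at h2 h3
    have hT : T w p = dX (pinvY w) p + dY (pinvX w) p := rfl
    simp only [hUhdef]
    linear_combination (-(h1)) * h p + (h2 + h3) * (u t p * h p)
      - 2 * (u t p * h p) * hT
  -- the variational derivative equals I ∫ u_t h
  have hIB : ∫ p : ℝ × ℝ, FB p = Complex.I * ∫ p : ℝ × ℝ, deriv (fun τ => u τ p) t * h p := by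
    have i4' : Integrable (fun p : ℝ × ℝ => Uh p * T w p) := i4
    have hone : ∫ p : ℝ × ℝ, (-(dX (dX (u t)) p * h p) - dY (dY (u t)) p * h p
        - u t p * ((r p.2 : ℂ) + (s p.1 : ℂ)) * h p - Uh p * T w p - T w p * Uh p)
        = Complex.I * ∫ p : ℝ × ℝ, deriv (fun τ => u τ p) t * h p := by
      rw [integral_congr_ae (Filter.Eventually.of_forall hpt2)]
      exact MeasureTheory.integral_const_mul Complex.I _
    have i5'' : Integrable (fun p : ℝ × ℝ => T w p * Uh p) := i5'
    have hsplit2 : ∫ p : ℝ × ℝ, (-(dX (dX (u t)) p * h p) - dY (dY (u t)) p * h p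
        - u t p * ((r p.2 : ℂ) + (s p.1 : ℂ)) * h p - Uh p * T w p - T w p * Uh p)
        = -(∫ p : ℝ × ℝ, dX (dX (u t)) p * h p) - (∫ p : ℝ × ℝ, dY (dY (u t)) p * h p)
          - (∫ p : ℝ × ℝ, u t p * ((r p.2 : ℂ) + (s p.1 : ℂ)) * h p)
          - (∫ p : ℝ × ℝ, Uh p * T w p) - ∫ p : ℝ × ℝ, T w p * Uh p := by
      exact integral_split5N _ _ _ _ _ i6 i7 i3 i4' i5''
    rw [hFBsplit, hA, hB, hC]
    linear_combination hone - hsplit2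
  -- conclude : the map is a quadratic polynomial in ε
  rw [show (fun ε : ℝ =>
        Ham r s (u t) (fun p => (starRingEnd ℂ) (u t p) + (ε : ℂ) * h p))
      = fun ε : ℝ => (∫ p : ℝ × ℝ, FA p) + (ε : ℂ) * (∫ p : ℝ × ℝ, FB p)
        + (ε : ℂ) ^ 2 * (∫ p : ℝ × ℝ, FC p) from funext hHam, ← hIB]
  have hofReal : HasDerivAt (fun ε : ℝ => (ε : ℂ)) 1 0 := by
    simpa using (hasDerivAt_id (0:ℝ)).ofReal_comp
  have hd1 : HasDerivAt (fun ε : ℝ => (ε : ℂ) * ∫ p : ℝ × ℝ, FB p)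
      (∫ p : ℝ × ℝ, FB p) 0 := by
    simpa using hofReal.mul_const (∫ p : ℝ × ℝ, FB p)
  have hsq : HasDerivAt (fun ε : ℝ => (ε : ℂ) ^ 2) 0 0 := by
    have h2 := hofReal.mul hofReal
    simpa [pow_two, Pi.mul_def] using h2
  have hd2 : HasDerivAt (fun ε : ℝ => (ε : ℂ) ^ 2 * ∫ p : ℝ × ℝ, FC p) 0 0 := by
    simpa using hsq.mul_const (∫ p : ℝ × ℝ, FC p)
  simpa [Pi.add_def] using ((hasDerivAt_const (0 : ℝ) (∫ p : ℝ × ℝ, FA p)).add hd1).add hd2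
end
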